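/- arXiv:1810.05980 — 6 statements merged into one kernel-verified Lean document; each statement's English description precedes it below -/
import Mathlib

section
/- If p is a prime with p ≡ 3 (mod 4), then the period length of the regular continued fraction expansion of √p is even. -/
/-- State `(m, d)` of the continued fraction algorithm for `√p` at step `i`,
representing the complete quotient `(√p + m) / d`; initial state `(0, 1)`. -/
def cfState (p : ℕ) : ℕ → ℕ × ℕ
  | 0 => (0, 1)
  | i + 1 =>
    let m := (cfState p i).1
    let d := (cfState p i).2
    let a := (Nat.sqrt p + m) / d
    (a * d - m, (p - (a * d - m) ^ 2) / d)

/-- The `i`-th partial quotient `aᵢ` of the regular continued fraction of `√p`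
(so `cfA p 0 = ⌊√p⌋`). -/
def cfA (p i : ℕ) : ℕ := (Nat.sqrt p + (cfState p i).1) / (cfState p i).2

/-- The period length `l` of the regular continued fraction of `√p`. -/
noncomputable def cfPeriod (p : ℕ) : ℕ := sInf {l | 0 < l ∧ cfState p (l + 1) = cfState p 1}

/-- `cfH p (i + 1)` is the denominator `hᵢ` of the `i`-th convergent of `√p`,
with the convention `cfH p 0 = h₋₁ = 0`, `cfH p 1 = h₀ = 1`,
`hᵢ₊₁ = aᵢ₊₁ hᵢ + hᵢ₋₁`. -/
def cfH (p : ℕ) : ℕ → ℕ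
  | 0 => 0
  | 1 => 1
  | i + 2 => cfA p (i + 1) * cfH p (i + 1) + cfH p i

/-! ### Auxiliary development -/

/-- The invariant maintained by the states of the continued fraction algorithm
(for indices `≥ 1`): writing `s = (m, d)` and `n = ⌊√p⌋`, we have `0 < d`,
`m ≤ n`, `n < m + d`, `d ≤ n + m` and `d ∣ p - m²`. -/
def CfGood (p : ℕ) (s : ℕ × ℕ) : Prop :=
  0 < s.2 ∧ s.1 ≤ Nat.sqrt p ∧ Nat.sqrt p < s.1 + s.2 ∧ s.2 ≤ Nat.sqrt p + s.1 ∧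
    ((s.2 : ℤ) ∣ (p : ℤ) - (s.1 : ℤ) ^ 2)

set_option maxHeartbeats 1000000 in
lemma cf_step_good {p m d : ℕ} (hsq : Nat.sqrt p ^ 2 < p) (h : CfGood p (m, d)) :
    CfGood p ((Nat.sqrt p + m) / d * d - m,
      (p - ((Nat.sqrt p + m) / d * d - m) ^ 2) / d) ∧
    ((m : ℤ) + ((Nat.sqrt p + m) / d * d - m : ℕ)
        = ((Nat.sqrt p + m) / d : ℕ) * d) ∧
    ((d : ℤ) * ((p - ((Nat.sqrt p + m) / d * d - m) ^ 2) / d : ℕ)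
        = (p : ℤ) - (((Nat.sqrt p + m) / d * d - m : ℕ) : ℤ) ^ 2) := by
  obtain ⟨hd, hm, hlow, hhigh, hdvd⟩ := h
  simp only at hd hm hlow hhigh hdvd
  set n := Nat.sqrt p with hn
  set a := (n + m) / d with ha
  have hsqm : n * n < p := by rwa [pow_two] at hsq
  have hp2 : p < (n + 1) * (n + 1) := by
    have h := Nat.lt_succ_sqrt' p
    rw [pow_two] at h
    exact h
  have hn1 : 1 ≤ n := by
    rcases Nat.eq_zero_or_pos n with h0 | h0
    · rw [h0] at hsqm hp2; simp at hsqm hp2; omega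
    · exact h0
  have ha1 : 1 ≤ a := (Nat.one_le_div_iff hd).2 hhigh
  have had_le : a * d ≤ n + m := Nat.div_mul_le_self _ _
  have hmod : a * d + (n + m) % d = n + m := by
    rw [mul_comm]; exact Nat.div_add_mod (n + m) d
  have hmodlt := Nat.mod_lt (n + m) hd
  -- m + 1 ≤ a * d
  have ham : m + 1 ≤ a * d := by
    rcases Nat.lt_or_ge d (n + 1) with hc | hc
    · omega
    · have h2 : a < 2 := by
        by_contra hcon
        push_neg at hcon
        have : 2 * d ≤ a * d := Nat.mul_le_mul_right d hcon
        omega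
      have ha' : a = 1 := by omega
      rw [ha'] at had_le ⊢
      omega
  set m' := a * d - m with hm'
  have hmm' : m + m' = a * d := by omega
  have hm'n : m' ≤ n := by omega
  have hm'1 : 1 ≤ m' := by omega
  have hm'low : n < m' + d := by omega
  have hm'sq : m' ^ 2 < p := by
    have h1 : m' * m' ≤ n * n := Nat.mul_le_mul hm'n hm'n
    rw [pow_two]; omega
  have hc : (m : ℤ) + (m' : ℤ) = (a : ℤ) * d := by exact_mod_cast hmm'
  have hdvd' : (d : ℤ) ∣ (p : ℤ) - (m' : ℤ) ^ 2 := by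
    have key : (p : ℤ) - (m' : ℤ) ^ 2
        = ((p : ℤ) - (m : ℤ) ^ 2) + (d : ℤ) * ((a : ℤ) * ((m : ℤ) - (m' : ℤ))) := by
      linear_combination ((m : ℤ) - (m' : ℤ)) * hc
    rw [key]
    exact dvd_add hdvd (Dvd.intro _ rfl)
  have hdvdN : d ∣ (p - m' ^ 2) := by
    have hcast : ((p - m' ^ 2 : ℕ) : ℤ) = (p : ℤ) - (m' : ℤ) ^ 2 := by
      push_cast [Nat.cast_sub hm'sq.le]
      ring
    have : (d : ℤ) ∣ ((p - m' ^ 2 : ℕ) : ℤ) := by rw [hcast]; exact hdvd'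
    exact_mod_cast this
  set d' := (p - m' ^ 2) / d with hd'
  have hdd' : d * d' = p - m' ^ 2 := Nat.mul_div_cancel' hdvdN
  have hd'pos : 0 < d' := by
    rcases Nat.eq_zero_or_pos d' with h0 | h0
    · exfalso; rw [h0, Nat.mul_zero] at hdd'; omega
    · exact h0
  have hZ : (d : ℤ) * (d' : ℤ) = (p : ℤ) - (m' : ℤ) ^ 2 := by
    have h1 : ((d * d' : ℕ) : ℤ) = ((p - m' ^ 2 : ℕ) : ℤ) := by exact_mod_cast hdd'
    push_cast [Nat.cast_sub hm'sq.le] at h1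
    linarith
  have hda : d ≤ m + m' := by
    have : 1 * d ≤ a * d := Nat.mul_le_mul_right d ha1
    omega
  -- n < m' + d'
  have h1' : n < m' + d' := by
    by_contra hcon
    push_neg at hcon
    have e1 : (d : ℤ) ≤ (n : ℤ) + m' := by exact_mod_cast le_trans hda (by omega)
    have e2 : (m' : ℤ) + d' ≤ n := by exact_mod_cast hcon
    have e3 : (1 : ℤ) ≤ d' := by exact_mod_cast hd'pos
    have e4 : (n : ℤ) * n < p := by exact_mod_cast hsqm
    have c1 : (d : ℤ) * d' ≤ ((n : ℤ) + m') * d' :=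
      mul_le_mul_of_nonneg_right e1 (by positivity)
    have c2 : ((n : ℤ) + m') * d' ≤ ((n : ℤ) + m') * ((n : ℤ) - m') :=
      mul_le_mul_of_nonneg_left (by linarith) (by positivity)
    have c3 : ((n : ℤ) + m') * ((n : ℤ) - m') = (n : ℤ) * n - (m' : ℤ) ^ 2 := by ring
    linarith
  -- d' ≤ n + m'
  have h2' : d' ≤ n + m' := by
    by_contra hcon
    push_neg at hcon
    have e1 : (n : ℤ) + 1 - m' ≤ d := by
      have h1 : (n : ℤ) < (m' : ℤ) + d := by exact_mod_cast hm'low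
      linarith
    have e2 : (n : ℤ) + m' + 1 ≤ d' := by exact_mod_cast hcon
    have e3 : (p : ℤ) < ((n : ℤ) + 1) * ((n : ℤ) + 1) := by exact_mod_cast hp2
    have e4 : (m' : ℤ) ≤ n := by exact_mod_cast hm'n
    have c1 : ((n : ℤ) + 1 - m') * ((n : ℤ) + m' + 1) ≤ (d : ℤ) * d' :=
      mul_le_mul e1 e2 (by positivity) (by positivity)
    have c2 : ((n : ℤ) + 1 - m') * ((n : ℤ) + m' + 1)
        = ((n : ℤ) + 1) * ((n : ℤ) + 1) - (m' : ℤ) ^ 2 := by ring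
    linarith
  refine ⟨⟨hd'pos, hm'n, h1', h2', ?_⟩, ?_, ?_⟩
  · refine ⟨(d : ℤ), ?_⟩
    simp only
    linarith [hZ]
  · simpa using hc
  · simpa using hZ

lemma cfState_succ' (p i : ℕ) : cfState p (i + 1) =
    ((Nat.sqrt p + (cfState p i).1) / (cfState p i).2 * (cfState p i).2 - (cfState p i).1,
     (p - ((Nat.sqrt p + (cfState p i).1) / (cfState p i).2 * (cfState p i).2
        - (cfState p i).1) ^ 2) / (cfState p i).2) := rfl

lemma cfState_one' (p : ℕ) : cfState p 1 = (Nat.sqrt p, p - Nat.sqrt p ^ 2) := by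
  simp [cfState]

/-- Invariants and the transition identities, for every step. -/
lemma cf_chain (p : ℕ) (hsq : Nat.sqrt p ^ 2 < p) : ∀ i,
    CfGood p (cfState p (i + 1)) ∧
    (((cfState p i).1 : ℤ) + ((cfState p (i + 1)).1 : ℤ)
      = (cfA p i : ℤ) * ((cfState p i).2 : ℤ)) ∧
    (((cfState p i).2 : ℤ) * ((cfState p (i + 1)).2 : ℤ)
      = (p : ℤ) - ((cfState p (i + 1)).1 : ℤ) ^ 2) := by
  have hn1 : 1 ≤ Nat.sqrt p := by
    rcases Nat.eq_zero_or_pos (Nat.sqrt p) with h0 | h0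
    · exfalso
      have := Nat.lt_succ_sqrt' p
      rw [h0] at this hsq
      simp at this hsq
      omega
    · exact h0
  have good1 : CfGood p (cfState p 1) := by
    rw [cfState_one']
    have h2 : p < (Nat.sqrt p + 1) ^ 2 := Nat.lt_succ_sqrt' p
    have h2' : p ≤ Nat.sqrt p ^ 2 + 2 * Nat.sqrt p := by
      have : (Nat.sqrt p + 1) ^ 2 = Nat.sqrt p ^ 2 + 2 * Nat.sqrt p + 1 := by ring
      omega
    refine ⟨by omega, le_refl _, by omega, by omega, ?_⟩
    simp only
    rw [Nat.cast_sub hsq.le]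
    push_cast
    exact dvd_refl _
  intro i
  induction i with
  | zero =>
    refine ⟨good1, ?_, ?_⟩
    · rw [cfState_one']
      simp [cfState, cfA]
    · rw [cfState_one']
      simp only [cfState]
      rw [Nat.cast_sub hsq.le]
      push_cast
      ring
  | succ i ih =>
    obtain ⟨hgood, -, -⟩ := ih
    obtain ⟨g', l2, l1⟩ := cf_step_good hsq (by
      rw [show ((cfState p (i+1)).1, (cfState p (i+1)).2) = cfState p (i+1) from rfl]
      exact hgood)
    rw [← cfState_succ' p (i+1)] at g'
    refine ⟨g', ?_, ?_⟩
    · rw [cfState_succ' p (i+1)]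
      exact l2
    · rw [cfState_succ' p (i+1)]
      exact l1

/-- Numerators of the convergents (ℤ-valued, shifted: `cfK p (i+1) = kᵢ`). -/
def cfK (p : ℕ) : ℕ → ℤ
  | 0 => 1
  | 1 => Nat.sqrt p
  | i + 2 => cfA p (i + 1) * cfK p (i + 1) + cfK p i

/-- Denominators of the convergents (ℤ-valued, shifted: `cfHZ p (i+1) = hᵢ`). -/
def cfHZ (p : ℕ) : ℕ → ℤ
  | 0 => 0
  | 1 => 1
  | i + 2 => cfA p (i + 1) * cfHZ p (i + 1) + cfHZ p i

/-- The fundamental identities for the convergents. -/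
lemma cf_EFG (p : ℕ) (hsq : Nat.sqrt p ^ 2 < p) : ∀ i,
    (cfK p (i + 1)) ^ 2 - p * (cfHZ p (i + 1)) ^ 2
        = (-1 : ℤ) ^ (i + 1) * ((cfState p (i + 1)).2 : ℤ) ∧
    cfK p (i + 1) * cfK p i - p * (cfHZ p (i + 1) * cfHZ p i)
        = (-1 : ℤ) ^ i * ((cfState p (i + 1)).1 : ℤ) ∧
    (cfK p i) ^ 2 - p * (cfHZ p i) ^ 2 = (-1 : ℤ) ^ i * ((cfState p i).2 : ℤ) := by
  intro i
  induction i with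
  | zero =>
    have h1 : cfState p 1 = (Nat.sqrt p, p - Nat.sqrt p ^ 2) := cfState_one' p
    have hc : ((p - Nat.sqrt p ^ 2 : ℕ) : ℤ) = (p : ℤ) - (Nat.sqrt p : ℤ) ^ 2 := by
      rw [Nat.cast_sub hsq.le]; push_cast; ring
    refine ⟨?_, ?_, ?_⟩
    · rw [h1]
      simp only [cfK, cfHZ, hc]
      push_cast
      ring
    · rw [h1]
      simp [cfK, cfHZ]
    · simp [cfK, cfHZ, cfState]
  | succ i ih =>
    obtain ⟨E, F, G⟩ := ih
    have L2 : ((cfState p (i + 1)).1 : ℤ) + ((cfState p (i + 2)).1 : ℤ)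
        = (cfA p (i + 1) : ℤ) * ((cfState p (i + 1)).2 : ℤ) := (cf_chain p hsq (i + 1)).2.1
    have L1 : ((cfState p (i + 1)).2 : ℤ) * ((cfState p (i + 2)).2 : ℤ)
        = (p : ℤ) - ((cfState p (i + 2)).1 : ℤ) ^ 2 := (cf_chain p hsq (i + 1)).2.2
    have L1' := (cf_chain p hsq i).2.2
    have hD1pos : (0 : ℤ) < ((cfState p (i + 1)).2 : ℤ) := by
      exact_mod_cast (cf_chain p hsq i).1.1
    have hrec : ((cfState p (i + 2)).2 : ℤ)
        = ((cfState p i).2 : ℤ) + (cfA p (i + 1) : ℤ)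
            * (((cfState p (i + 1)).1 : ℤ) - ((cfState p (i + 2)).1 : ℤ)) := by
      have key : (((cfState p (i + 2)).2 : ℤ) - ((cfState p i).2 : ℤ)
          - (cfA p (i + 1) : ℤ)
            * (((cfState p (i + 1)).1 : ℤ) - ((cfState p (i + 2)).1 : ℤ)))
          * ((cfState p (i + 1)).2 : ℤ) = 0 := by
        linear_combination L1 - L1' + (((cfState p (i + 1)).1 : ℤ)
          - ((cfState p (i + 2)).1 : ℤ)) * L2
      rcases mul_eq_zero.mp key with h | h
      · linarith
      · exfalso; linarith
    have hK : cfK p (i + 2) = cfA p (i + 1) * cfK p (i + 1) + cfK p i := rfl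
    have hH : cfHZ p (i + 2) = cfA p (i + 1) * cfHZ p (i + 1) + cfHZ p i := rfl
    have F' : cfK p (i + 2) * cfK p (i + 1) - p * (cfHZ p (i + 2) * cfHZ p (i + 1))
        = (-1 : ℤ) ^ (i + 1) * ((cfState p (i + 2)).1 : ℤ) := by
      have expand : cfK p (i + 2) * cfK p (i + 1) - p * (cfHZ p (i + 2) * cfHZ p (i + 1))
          = (cfA p (i + 1) : ℤ) * ((cfK p (i + 1)) ^ 2 - p * (cfHZ p (i + 1)) ^ 2)
            + (cfK p (i + 1) * cfK p i - p * (cfHZ p (i + 1) * cfHZ p i)) := by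
        rw [hK, hH]; ring
      rw [expand, E, F]
      have : ((cfState p (i + 2)).1 : ℤ)
          = (cfA p (i + 1) : ℤ) * ((cfState p (i + 1)).2 : ℤ)
            - ((cfState p (i + 1)).1 : ℤ) := by linarith [L2]
      rw [this]
      ring
    refine ⟨?_, F', E⟩
    have expand2 : (cfK p (i + 2)) ^ 2 - p * (cfHZ p (i + 2)) ^ 2
        = (cfA p (i + 1) : ℤ)
            * ((cfK p (i + 2) * cfK p (i + 1) - p * (cfHZ p (i + 2) * cfHZ p (i + 1)))
              + (cfK p (i + 1) * cfK p i - p * (cfHZ p (i + 1) * cfHZ p i)))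
          + ((cfK p i) ^ 2 - p * (cfHZ p i) ^ 2) := by
      rw [hK, hH]; ring
    rw [expand2, F', F, G, hrec]
    ring

theorem stmt0 (p : ℕ) (hp : p.Prime) (h3 : p % 4 = 3) :
    Even (cfPeriod p) := by
  -- `p` is not a perfect square
  have hsq : Nat.sqrt p ^ 2 < p := by
    rcases lt_or_eq_of_le (Nat.sqrt_le' p) with h | h
    · exact h
    · exfalso
      have hdvd : Nat.sqrt p ∣ p := ⟨Nat.sqrt p, by rw [← pow_two]; exact h.symm⟩
      rcases (Nat.Prime.eq_one_or_self_of_dvd hp _ hdvd) with h1 | h1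
      · rw [h1] at h; simp at h; exact hp.one_lt.ne' (by omega)
      · rw [h1] at h
        have := hp.one_lt
        nlinarith
  by_cases hS : Set.Nonempty {l | 0 < l ∧ cfState p (l + 1) = cfState p 1}
  · have hmem : cfPeriod p ∈ {l | 0 < l ∧ cfState p (l + 1) = cfState p 1} :=
      Nat.sInf_mem hS
    obtain ⟨hlpos, hst⟩ := hmem
    set l := cfPeriod p with hl
    rcases Nat.even_or_odd l with he | ho
    · exact he
    exfalso
    -- compute D l = 1
    have hM : ((cfState p (l + 1)).1 : ℤ) = (Nat.sqrt p : ℤ) := by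
      rw [hst, cfState_one']
    have hD : ((cfState p (l + 1)).2 : ℤ) = (p : ℤ) - (Nat.sqrt p : ℤ) ^ 2 := by
      rw [hst, cfState_one']
      simp only
      rw [Nat.cast_sub hsq.le]
      push_cast
      ring
    have L1 := (cf_chain p hsq l).2.2
    rw [hM, hD] at L1
    have hne : (p : ℤ) - (Nat.sqrt p : ℤ) ^ 2 ≠ 0 := by
      have : (Nat.sqrt p : ℤ) ^ 2 < p := by exact_mod_cast hsq
      linarith
    have hDl : ((cfState p l).2 : ℤ) = 1 := by
      have := mul_right_cancel₀ hne (by linarith [L1] :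
        ((cfState p l).2 : ℤ) * ((p : ℤ) - (Nat.sqrt p : ℤ) ^ 2)
          = 1 * ((p : ℤ) - (Nat.sqrt p : ℤ) ^ 2))
      exact this
    -- the Pell-type identity at l
    have G := (cf_EFG p hsq l).2.2
    rw [hDl, mul_one, Odd.neg_one_pow ho] at G
    -- pass to ZMod p
    haveI : Fact p.Prime := ⟨hp⟩
    have hzm : ((cfK p l : ZMod p)) ^ 2 = -1 := by
      have := congrArg (fun z : ℤ => (z : ZMod p)) G
      push_cast at this
      simpa [ZMod.natCast_self] using this
    have hsqr : IsSquare (-1 : ZMod p) := ⟨(cfK p l : ZMod p), by rw [← hzm]; ring⟩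
    rw [ZMod.exists_sq_eq_neg_one_iff] at hsqr
    exact hsqr h3
  · rw [Set.not_nonempty_iff_eq_empty] at hS
    unfold cfPeriod
    rw [hS, Nat.sInf_empty]
    exact Even.zero
end

section
/- Let p be a prime with regular continued fraction √p = ⟨n; a₁, …, a_{l−1}, 2n⟩ of period length l, and let h_i denote the denominators of the convergents (with h_{−1} = 0, h₀ = 1, h_{i+1} = a_{i+1}h_i + h_{i−1}). Then for all 0 ≤ i ≤ l−2, h_{l−1} = h_i·h_{l−1−i} + h_{i−1}·h_{l−2−i}. -/
namespace CFP

def Good (p m d : ℕ) : Prop :=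
  1 ≤ m ∧ m ≤ p.sqrt ∧ 1 ≤ d ∧ d ∣ p - m ^ 2 ∧ d ≤ p.sqrt + m ∧ p.sqrt < m + d

theorem state_succ (p i : ℕ) :
    cfState p (i + 1) = (cfA p i * (cfState p i).2 - (cfState p i).1,
      (p - (cfA p i * (cfState p i).2 - (cfState p i).1) ^ 2) / (cfState p i).2) := rfl

theorem good_step (p m d a m' d' : ℕ) (hsq : p.sqrt * p.sqrt < p)
    (hup : p < (p.sqrt + 1) * (p.sqrt + 1)) (h : Good p m d)
    (ha : a = (p.sqrt + m) / d) (hm' : m' = a * d - m) (hd' : d' = (p - m' ^ 2) / d) :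
    m + 1 ≤ a * d ∧ Good p m' d' ∧ d * d' = p - m' ^ 2 := by
  obtain ⟨h1, h2, h3, h4, h5, h6⟩ := h
  set s := p.sqrt with hs
  have h0 := Nat.div_add_mod (s + m) d
  have h0' := Nat.mod_lt (s + m) h3
  have hcm : a * d = d * ((s + m) / d) := by rw [ha, Nat.mul_comm]
  have hd1 : a * d ≤ s + m := by omega
  have hd2 : s + m < a * d + d := by omega
  have ha1 : 1 ≤ a := by rw [ha]; exact (Nat.one_le_div_iff h3).mpr h5
  have had : d ≤ a * d := Nat.le_mul_of_pos_left d ha1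
  have hma : m + 1 ≤ a * d := by omega
  have hm'eq : m' + m = a * d := by omega
  have hm'1 : 1 ≤ m' := by omega
  have hm'2 : m' ≤ s := by omega
  have hm'p : m' ^ 2 < p := by
    have h9 : m' ^ 2 ≤ s ^ 2 := Nat.pow_le_pow_left hm'2 2
    have h8 : s ^ 2 = s * s := sq s
    omega
  have hmp : m ^ 2 < p := by
    have h9 : m ^ 2 ≤ s ^ 2 := Nat.pow_le_pow_left h2 2
    have h8 : s ^ 2 = s * s := sq s
    omega
  have hdvd : d ∣ p - m' ^ 2 := by
    have h4' : (d : ℤ) ∣ (p : ℤ) - (m : ℤ) ^ 2 := by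
      have := Int.natCast_dvd_natCast.mpr h4
      rwa [Nat.cast_sub hmp.le, Nat.cast_pow] at this
    have hc : (m' : ℤ) + m = (a : ℤ) * d := by exact_mod_cast hm'eq
    have hkey : (p : ℤ) - (m' : ℤ) ^ 2 =
        ((p : ℤ) - (m : ℤ) ^ 2) + ((m : ℤ) - (m' : ℤ)) * ((a : ℤ) * d) := by
      linear_combination ((m : ℤ) - m') * hc
    have hz : (d : ℤ) ∣ (p : ℤ) - (m' : ℤ) ^ 2 := by
      rw [hkey]
      exact dvd_add h4' (Dvd.dvd.mul_left (dvd_mul_left (d : ℤ) (a : ℤ)) _)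
    have h9 : ((p - m' ^ 2 : ℕ) : ℤ) = (p : ℤ) - (m' : ℤ) ^ 2 := by
      rw [Nat.cast_sub hm'p.le, Nat.cast_pow]
    exact Int.natCast_dvd_natCast.mp (h9 ▸ hz)
  have hdd' : d * d' = p - m' ^ 2 := by rw [hd']; exact Nat.mul_div_cancel' hdvd
  have hd'1 : 1 ≤ d' := by
    have := Nat.le_of_dvd (by omega) hdvd
    rw [hd']; exact Nat.div_pos this h3
  have hdm' : s < d + m' := by omega
  have hcast : ((p - m' ^ 2 : ℕ) : ℤ) = (p : ℤ) - (m' : ℤ) ^ 2 := by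
    rw [Nat.cast_sub hm'p.le, Nat.cast_pow]
  have hZ : (d : ℤ) * d' = (p : ℤ) - (m' : ℤ) ^ 2 := by
    rw [← hcast]; exact_mod_cast hdd'
  have hupZ : (p : ℤ) < ((s : ℤ) + 1) ^ 2 := by
    have : (p : ℤ) < ((s + 1 : ℕ) : ℤ) * ((s + 1 : ℕ) : ℤ) := by exact_mod_cast hup
    push_cast at this
    calc (p : ℤ) < ((s : ℤ) + 1) * ((s : ℤ) + 1) := this
      _ = ((s : ℤ) + 1) ^ 2 := (sq _).symm
  have hsqZ : (s : ℤ) * s < p := by exact_mod_cast hsq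
  have hd'le : d' ≤ s + m' := by
    by_contra hc
    push_neg at hc
    have e1 : (s : ℤ) + 1 - m' ≤ d := by
      have : (s : ℤ) < d + m' := by exact_mod_cast hdm'
      linarith
    have e2 : (s : ℤ) + m' + 1 ≤ d' := by exact_mod_cast hc
    have e0 : (0 : ℤ) ≤ (s : ℤ) + 1 - m' := by
      have : (m' : ℤ) ≤ s := by exact_mod_cast hm'2
      linarith
    have e3 : (0 : ℤ) ≤ (d' : ℤ) := by positivity
    have key : ((s : ℤ) + 1 - m') * ((s : ℤ) + m' + 1) ≤ (d : ℤ) * d' :=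
      mul_le_mul e1 e2 (by linarith) (by positivity)
    have expand : ((s : ℤ) + 1 - m') * ((s : ℤ) + m' + 1) = ((s : ℤ) + 1) ^ 2 - m' ^ 2 := by
      ring
    linarith
  have hd'5 : s < m' + d' := by
    by_contra hc
    push_neg at hc
    have e1 : (d : ℤ) ≤ s + m' := by
      have : d ≤ s + m' := by omega
      exact_mod_cast this
    have e2 : (d' : ℤ) ≤ s - m' := by
      have hcc : m' + d' ≤ s := hc
      have : (m' : ℤ) + d' ≤ s := by exact_mod_cast hcc
      linarith
    have e3 : (1 : ℤ) ≤ d' := by exact_mod_cast hd'1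
    have e4 : (0 : ℤ) ≤ (d' : ℤ) := by positivity
    have key : (d : ℤ) * d' ≤ ((s : ℤ) + m') * ((s : ℤ) - m') :=
      mul_le_mul e1 e2 e4 (by positivity)
    have expand : ((s : ℤ) + m') * ((s : ℤ) - m') = (s : ℤ) * s - m' ^ 2 := by ring
    linarith
  have hdvd' : d' ∣ p - m' ^ 2 := ⟨d, by rw [← hdd']; ring⟩
  exact ⟨hma, ⟨hm'1, hm'2, hd'1, hdvd', hd'le, hd'5⟩, hdd'⟩

theorem prime_sqrt_lt (p : ℕ) (hp : p.Prime) : p.sqrt * p.sqrt < p := by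
  rcases Nat.lt_or_ge (p.sqrt * p.sqrt) p with h | h
  · exact h
  · exfalso
    have hle : p.sqrt * p.sqrt ≤ p := by have := Nat.sqrt_le' p; rwa [pow_two] at this
    have he : p.sqrt * p.sqrt = p := le_antisymm hle h
    have hdvd : p.sqrt ∣ p := ⟨p.sqrt, he.symm⟩
    rcases (Nat.Prime.eq_one_or_self_of_dvd hp _ hdvd) with h1 | h1
    · rw [h1] at he; simpa [← he] using hp.one_lt
    · rw [h1] at he
      nlinarith [hp.two_le]

theorem prime_lt_sqrt (p : ℕ) : p < (p.sqrt + 1) * (p.sqrt + 1) := by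
  have := Nat.lt_succ_sqrt' p
  rwa [Nat.succ_eq_add_one, pow_two] at this

theorem prime_sqrt_pos (p : ℕ) (hp : p.Prime) : 1 ≤ p.sqrt :=
  Nat.sqrt_pos.mpr hp.pos

theorem state_one (p : ℕ) : cfState p 1 = (p.sqrt, p - p.sqrt ^ 2) := by
  simp [cfState]

theorem good_one (p : ℕ) (hsq : p.sqrt * p.sqrt < p)
    (hup : p < (p.sqrt + 1) * (p.sqrt + 1)) (hs1 : 1 ≤ p.sqrt) :
    Good p p.sqrt (p - p.sqrt ^ 2) := by
  have hB : p.sqrt ^ 2 < p := by rw [pow_two]; exact hsq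
  have hA : p ≤ p.sqrt ^ 2 + 2 * p.sqrt := by nlinarith
  refine ⟨hs1, le_rfl, by omega, dvd_rfl, by omega, by omega⟩

theorem good_all (p : ℕ) (hsq : p.sqrt * p.sqrt < p)
    (hup : p < (p.sqrt + 1) * (p.sqrt + 1)) (hs1 : 1 ≤ p.sqrt) :
    ∀ i, Good p (cfState p (i + 1)).1 (cfState p (i + 1)).2 := by
  intro i
  induction i with
  | zero => rw [state_one]; exact good_one p hsq hup hs1
  | succ j ih =>
    obtain ⟨-, hg, -⟩ := good_step p (cfState p (j + 1)).1 (cfState p (j + 1)).2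
      (cfA p (j + 1)) (cfState p (j + 2)).1 (cfState p (j + 2)).2 hsq hup ih rfl
      (by rw [state_succ]) (by rw [state_succ])
    exact hg

theorem sum_eq (p : ℕ) (hsq : p.sqrt * p.sqrt < p)
    (hup : p < (p.sqrt + 1) * (p.sqrt + 1)) (hs1 : 1 ≤ p.sqrt) :
    ∀ i, (cfState p (i + 1)).1 + (cfState p i).1 = cfA p i * (cfState p i).2 := by
  intro i
  match i with
  | 0 => simp [cfA, cfState]
  | j + 1 =>
    obtain ⟨hle, -, -⟩ := good_step p (cfState p (j + 1)).1 (cfState p (j + 1)).2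
      (cfA p (j + 1)) (cfState p (j + 2)).1 (cfState p (j + 2)).2 hsq hup
      (good_all p hsq hup hs1 j) rfl (by rw [state_succ]) (by rw [state_succ])
    have hm : (cfState p (j + 2)).1
        = cfA p (j + 1) * (cfState p (j + 1)).2 - (cfState p (j + 1)).1 := by
      rw [state_succ]
    show (cfState p (j + 2)).1 + (cfState p (j + 1)).1 = cfA p (j + 1) * (cfState p (j + 1)).2
    omega

theorem prod_eq (p : ℕ) (hsq : p.sqrt * p.sqrt < p)
    (hup : p < (p.sqrt + 1) * (p.sqrt + 1)) (hs1 : 1 ≤ p.sqrt) :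
    ∀ i, (cfState p i).2 * (cfState p (i + 1)).2 = p - (cfState p (i + 1)).1 ^ 2 := by
  intro i
  match i with
  | 0 => simp [cfA, cfState]
  | j + 1 =>
    obtain ⟨-, -, hprod⟩ := good_step p (cfState p (j + 1)).1 (cfState p (j + 1)).2
      (cfA p (j + 1)) (cfState p (j + 2)).1 (cfState p (j + 2)).2 hsq hup
      (good_all p hsq hup hs1 j) rfl (by rw [state_succ]) (by rw [state_succ])
    exact hprod
theorem aEq (p : ℕ) (hsq : p.sqrt * p.sqrt < p)
    (hup : p < (p.sqrt + 1) * (p.sqrt + 1)) (hs1 : 1 ≤ p.sqrt) (i j : ℕ) (hj : 1 ≤ j)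
    (hm : (cfState p (i + 1)).1 = (cfState p (j + 1)).1)
    (hd : (cfState p (i + 1)).2 = (cfState p j).2) :
    cfA p (i + 1) = cfA p j ∧ (cfState p (i + 2)).1 = (cfState p j).1 := by
  obtain ⟨j', rfl⟩ : ∃ j', j = j' + 1 := ⟨j - 1, by omega⟩
  obtain ⟨g1, g2, g3, -, -, g6⟩ := good_all p hsq hup hs1 j'
  have hsumj := sum_eq p hsq hup hs1 (j' + 1)
  have hA : cfA p (i + 1) = cfA p (j' + 1) := by
    show (Nat.sqrt p + (cfState p (i + 1)).1) / (cfState p (i + 1)).2 = cfA p (j' + 1)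
    apply Nat.div_eq_of_lt_le
    · rw [hd]
      omega
    · rw [hd]
      have hexp : (cfA p (j' + 1) + 1) * (cfState p (j' + 1)).2
          = cfA p (j' + 1) * (cfState p (j' + 1)).2 + (cfState p (j' + 1)).2 := by ring
      omega
  have hsumi : (cfState p (i + 2)).1 + (cfState p (i + 1)).1
      = cfA p (i + 1) * (cfState p (i + 1)).2 := sum_eq p hsq hup hs1 (i + 1)
  have hM : (cfState p (i + 2)).1 = (cfState p (j' + 1)).1 := by
    have hmul : cfA p (i + 1) * (cfState p (i + 1)).2
        = cfA p (j' + 1) * (cfState p (j' + 1)).2 := by rw [hA, hd]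
    omega
  exact ⟨hA, hM⟩

theorem sym (p l : ℕ) (hsq : p.sqrt * p.sqrt < p)
    (hup : p < (p.sqrt + 1) * (p.sqrt + 1)) (hs1 : 1 ≤ p.sqrt)
    (hper : cfState p (l + 1) = cfState p 1) (hl : 1 ≤ l) :
    ∀ i, i + 1 ≤ l →
      (cfState p (i + 1)).1 = (cfState p (l - i)).1 ∧
      (cfState p i).2 = (cfState p (l - i)).2 := by
  obtain ⟨l', rfl⟩ : ∃ l', l = l' + 1 := ⟨l - 1, by omega⟩
  have hDl1 : (cfState p (l' + 1 + 1)).2 = p - Nat.sqrt p ^ 2 := by rw [hper, state_one]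
  have hMl1 : (cfState p (l' + 1 + 1)).1 = Nat.sqrt p := by rw [hper, state_one]
  have hpe := prod_eq p hsq hup hs1 (l' + 1)
  rw [hDl1, hMl1] at hpe
  have hB : Nat.sqrt p ^ 2 < p := by rw [pow_two]; exact hsq
  have hDl : (cfState p (l' + 1)).2 = 1 := by
    apply Nat.eq_of_mul_eq_mul_right (show 0 < p - Nat.sqrt p ^ 2 by omega)
    rw [one_mul]; exact hpe
  obtain ⟨-, g2, -, -, -, g6⟩ := good_all p hsq hup hs1 l'
  have hMl : (cfState p (l' + 1)).1 = Nat.sqrt p := by omega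
  intro i
  induction i with
  | zero =>
    intro _
    refine ⟨?_, ?_⟩
    · show (cfState p 1).1 = (cfState p (l' + 1 - 0)).1
      have h1 : (cfState p 1).1 = Nat.sqrt p := by rw [state_one]
      rw [Nat.sub_zero, h1, hMl]
    · show (cfState p 0).2 = (cfState p (l' + 1 - 0)).2
      rw [Nat.sub_zero, hDl]
      rfl
  | succ n ih =>
    intro hn
    obtain ⟨sm, sd⟩ := ih (by omega)
    have hj1 : l' + 1 - n = (l' - n) + 1 := by omega
    have hj2 : l' + 1 - (n + 1) = l' - n := by omega
    have hjge : 1 ≤ l' - n := by omega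
    rw [hj1] at sm sd
    have hpn := prod_eq p hsq hup hs1 n
    have hpj := prod_eq p hsq hup hs1 (l' - n)
    rw [sd, sm] at hpn
    have hDpos : 0 < (cfState p ((l' - n) + 1)).2 :=
      (good_all p hsq hup hs1 (l' - n)).2.2.1
    have hDD : (cfState p (n + 1)).2 = (cfState p (l' - n)).2 := by
      apply Nat.eq_of_mul_eq_mul_left hDpos
      rw [hpn, ← hpj]
      exact Nat.mul_comm _ _
    obtain ⟨hA, hM⟩ := aEq p hsq hup hs1 n (l' - n) hjge sm hDD
    rw [hj2]
    exact ⟨hM, hDD⟩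

theorem pal (p l : ℕ) (hsq : p.sqrt * p.sqrt < p)
    (hup : p < (p.sqrt + 1) * (p.sqrt + 1)) (hs1 : 1 ≤ p.sqrt)
    (hper : cfState p (l + 1) = cfState p 1) (i : ℕ) (hil : i + 2 ≤ l) :
    cfA p (i + 1) = cfA p (l - 1 - i) := by
  have s1 := (sym p l hsq hup hs1 hper (by omega) i (by omega)).1
  have s2 := (sym p l hsq hup hs1 hper (by omega) (i + 1) (by omega)).2
  have hj : l - (i + 1) = l - 1 - i := by omega
  have hj2 : l - i = (l - 1 - i) + 1 := by omega
  rw [hj2] at s1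
  rw [hj] at s2
  exact (aEq p hsq hup hs1 i (l - 1 - i) (by omega) s1 s2).1

theorem key (p l : ℕ) (hsq : p.sqrt * p.sqrt < p)
    (hup : p < (p.sqrt + 1) * (p.sqrt + 1)) (hs1 : 1 ≤ p.sqrt)
    (hper : cfState p (l + 1) = cfState p 1) :
    ∀ i, i + 2 ≤ l →
      cfH p l = cfH p (i + 1) * cfH p (l - i) + cfH p i * cfH p (l - 1 - i) := by
  intro i
  induction i with
  | zero => intro h; simp [cfH]
  | succ n ih =>
    intro hn
    have IH := ih (by omega)
    obtain ⟨k, hk⟩ : ∃ k, l = n + 3 + k := ⟨l - (n + 3), by omega⟩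
    subst hk
    have e1 : n + 3 + k - n = k + 3 := by omega
    have e2 : n + 3 + k - 1 - n = k + 2 := by omega
    have e3 : n + 3 + k - (n + 1) = k + 2 := by omega
    have e4 : n + 3 + k - 1 - (n + 1) = k + 1 := by omega
    rw [e1, e2] at IH
    rw [e3, e4]
    have hH1 : cfH p (n + 2) = cfA p (n + 1) * cfH p (n + 1) + cfH p n := rfl
    have hH2 : cfH p (k + 3) = cfA p (k + 2) * cfH p (k + 2) + cfH p (k + 1) := rfl
    have hpal : cfA p (n + 1) = cfA p (k + 2) := by
      have h := pal p (n + 3 + k) hsq hup hs1 hper n (by omega)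
      rwa [e2] at h
    rw [IH, hH2, show (n + 1) + 1 = n + 2 from rfl, hH1, hpal]
    ring

end CFP

theorem stmt1 (p : ℕ) (hp : p.Prime) (i : ℕ) (hi : i + 2 ≤ cfPeriod p) :
    cfH p (cfPeriod p) =
      cfH p (i + 1) * cfH p (cfPeriod p - i) + cfH p i * cfH p (cfPeriod p - 1 - i) := by
  have hsq := CFP.prime_sqrt_lt p hp
  have hup := CFP.prime_lt_sqrt p
  have hs1 := CFP.prime_sqrt_pos p hp
  have hne : {n | 0 < n ∧ cfState p (n + 1) = cfState p 1}.Nonempty := by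
    by_contra h
    rw [Set.not_nonempty_iff_eq_empty] at h
    have h0 : cfPeriod p = 0 := by rw [cfPeriod, h, Nat.sInf_empty]
    omega
  have hmem : 0 < cfPeriod p ∧ cfState p (cfPeriod p + 1) = cfState p 1 :=
    Nat.sInf_mem hne
  exact CFP.key p (cfPeriod p) hsq hup hs1 hmem.2 i hi
end

section
/- Let p be a prime with regular continued fraction √p = ⟨n; a₁, …, a_{l−1}, 2n⟩ of even period length l, and let h_i be the convergent denominators. Then h_{l−1} = h_{l/2−1} · (h_{l/2} + h_{l/2−2}). -/
/-! The states `(mᵢ, dᵢ)` of the algorithm satisfy `mᵢ + mᵢ₊₁ = aᵢ dᵢ` and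
`dᵢ dᵢ₊₁ = p - mᵢ₊₁²`, and `mᵢ₊₁` is the unique solution of the first relation in the window
`(√p - dᵢ, √p]`. At the end of a period the state is `(⌊√p⌋, 1)` again,
and these relations can be run backwards from there: `d_{l-j} = d_j`, `m_{l-j} = m_{j+1}`,
hence `a_{l-i} = aᵢ`. The `hᵢ` are continuants of `a₁, …, aᵢ`; splitting the continuant of
`a₁, …, a_{2m-1}` after `a_m` and using that continuants are invariant under reversal of the
palindromic tail gives `h_{2m-1} = h_{m-1} (h_m + h_{m-2})`. -/

/-- `continuant b (n + 1)` is the continuant `K(b₁, …, bₙ)`; `b 0` is never used. -/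
def continuant (b : ℕ → ℕ) : ℕ → ℕ
  | 0 => 0
  | 1 => 1
  | i + 2 => b (i + 1) * continuant b (i + 1) + continuant b i

theorem continuant_congr {b c : ℕ → ℕ} :
    ∀ n, (∀ i, 1 ≤ i → i < n → b i = c i) → continuant b n = continuant c n
  | 0, _ => rfl
  | 1, _ => rfl
  | n + 2, h => by
    rw [continuant, continuant, h (n + 1) (by omega) (by omega),
      continuant_congr (n + 1) fun i h₁ h₂ => h i h₁ (by omega),
      continuant_congr n fun i h₁ h₂ => h i h₁ (by omega)]

theorem continuant_add (b : ℕ → ℕ) (n j : ℕ) :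
    continuant b (n + j + 1) =
      continuant b (n + 1) * continuant (fun i => b (n + i)) (j + 1) +
        continuant b n * continuant (fun i => b (n + 1 + i)) j := by
  induction j using Nat.twoStepInduction with
  | zero => simp [continuant]
  | one => simp [continuant]; ring
  | more j ih₁ ih₂ =>
    rw [show n + (j + 2) + 1 = n + j + 1 + 2 by omega, continuant,
      show n + j + 1 + 1 = n + (j + 1) + 1 by omega, ih₁, ih₂]
    simp only [continuant, show n + (j + 1) + 1 = n + (j + 2) by omega,
      show n + 1 + (j + 1) = n + (j + 2) by omega]
    ring

theorem continuant_reverse :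
    ∀ (n : ℕ) (b : ℕ → ℕ), continuant b (n + 1) = continuant (fun i => b (n + 1 - i)) (n + 1)
  | 0, _ => rfl
  | 1, b => by simp [continuant]
  | n + 2, b => by
    have front := continuant_add (fun i => b (n + 3 - i)) 1 (n + 1)
    have h₁ : continuant (fun i => b (n + 3 - (1 + i))) (n + 1 + 1) = continuant b (n + 2) := by
      rw [continuant_reverse (n + 1) b]
      exact continuant_congr _ fun i _ _ => by congr 1; omega
    have h₂ : continuant (fun i => b (n + 3 - (1 + 1 + i))) (n + 1) = continuant b (n + 1) := by
      rw [continuant_reverse n b]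
      exact continuant_congr _ fun i _ _ => by congr 1; omega
    rw [show 1 + (n + 1) + 1 = n + 3 by omega, h₁, h₂] at front
    rw [front]
    simp [continuant]

theorem continuant_two_mul_of_palindrome (b : ℕ → ℕ) (m : ℕ)
    (hb : ∀ i, 1 ≤ i → i < 2 * m → b (2 * m - i) = b i) :
    continuant b (2 * m) = continuant b m * (continuant b (m + 1) + continuant b (m - 1)) := by
  rcases m with _ | m
  · rfl
  have half := continuant_add b (m + 1) m
  have tail₁ : continuant (fun i => b (m + 1 + i)) (m + 1) = continuant b (m + 1) := by
    rw [continuant_reverse]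
    exact continuant_congr _ fun i h₁ h₂ => by
      rw [show m + 1 + (m + 1 - i) = 2 * (m + 1) - i by omega]; exact hb i h₁ (by omega)
  have tail₂ : continuant (fun i => b (m + 1 + 1 + i)) m = continuant b m := by
    rcases m with _ | k
    · rfl
    rw [continuant_reverse]
    exact continuant_congr _ fun i h₁ h₂ => by
      rw [show k + 1 + 1 + 1 + (k + 1 - i) = 2 * (k + 1 + 1) - i by omega]; exact hb i h₁ (by omega)
  rw [show 2 * (m + 1) = m + 1 + m + 1 by omega, half, tail₁, tail₂, Nat.add_sub_cancel]
  ring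

def cfM (p i : ℕ) : ℕ := (cfState p i).1

def cfD (p i : ℕ) : ℕ := (cfState p i).2

theorem cfA_eq (p i : ℕ) : cfA p i = (Nat.sqrt p + cfM p i) / cfD p i := rfl

theorem cfM_succ (p i : ℕ) : cfM p (i + 1) = cfA p i * cfD p i - cfM p i := rfl

theorem cfD_succ (p i : ℕ) : cfD p (i + 1) = (p - cfM p (i + 1) ^ 2) / cfD p i := rfl

theorem Nat.sqrt_mul_self_lt_of_not_isSquare {p : ℕ} (hp : ¬IsSquare p) :
    Nat.sqrt p * Nat.sqrt p < p :=
  (Nat.sqrt_le p).lt_of_ne fun h => hp ⟨Nat.sqrt p, h.symm⟩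

theorem div_eq_of_add_eq_mul {s c d x a : ℕ} (hx : x ≤ s) (hsx : s < x + d) (h : x + c = a * d) :
    (s + c) / d = a :=
  Nat.div_eq_of_lt_le (by omega) (by rw [add_mul, one_mul]; omega)

theorem dvd_sub_sq_of_add_eq_mul {p m m' a d : ℕ} (hm : m ^ 2 ≤ p) (hm' : m' ^ 2 ≤ p)
    (hdvd : d ∣ p - m ^ 2) (h : m + m' = a * d) : d ∣ p - m' ^ 2 := by
  rw [← Int.natCast_dvd_natCast] at *
  push_cast [hm, hm'] at *
  have hz : (m : ℤ) + m' = a * d := by exact_mod_cast h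
  have key : (p : ℤ) - m' ^ 2 = (p - m ^ 2) + d * (a * (m - m')) := by linear_combination (m - m') * hz
  rw [key]
  exact dvd_add hdvd (dvd_mul_right _ _)

theorem cf_denominator_bounds {p s m m' d d' : ℕ} (hs : s * s < p) (hs' : p < (s + 1) * (s + 1))
    (hm : m ≤ s) (hm' : m' ≤ s) (hsm' : s < m' + d) (hd : d ≤ m + m') (h : d * d' = p - m' ^ 2) :
    0 < d' ∧ d' ≤ s + m' ∧ s < m' + d' := by
  have hlt : m' ^ 2 < p := by nlinarith
  have hz : (d : ℤ) * d' = p - m' ^ 2 := by zify [hlt.le] at h; exact h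
  refine ⟨Nat.pos_of_ne_zero fun h0 => by subst h0; omega, ?_, ?_⟩
  · by_contra! h1
    have : ((s : ℤ) - m' + 1) * (s + m' + 1) ≤ d * d' :=
      mul_le_mul (by omega) (by omega) (by omega) (by omega)
    nlinarith
  · by_contra! h2
    nlinarith

/-- Unlike reducedness of `(√p + m) / d`, this invariant does not ask for `√p < m + d`, so that
it holds already for the initial state `(0, 1)`. -/
structure IsCFState (p m d : ℕ) : Prop where
  d_pos : 0 < d
  m_le : m ≤ Nat.sqrt p
  d_le : d ≤ Nat.sqrt p + m
  dvd : d ∣ p - m ^ 2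

theorem cfM_succ_le (p i : ℕ) : cfM p (i + 1) ≤ Nat.sqrt p := by
  have := Nat.div_mul_le_self (Nat.sqrt p + cfM p i) (cfD p i)
  rw [cfM_succ, cfA_eq]
  omega

theorem sqrt_lt_cfM_succ_add_cfD {p i : ℕ} (h : 0 < cfD p i) :
    Nat.sqrt p < cfM p (i + 1) + cfD p i := by
  have := Nat.lt_div_mul_add (a := Nat.sqrt p + cfM p i) h
  rw [cfM_succ, cfA_eq]
  omega

namespace IsCFState

variable {p i : ℕ}

theorem one_le_cfA (h : IsCFState p (cfM p i) (cfD p i)) : 1 ≤ cfA p i :=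
  (Nat.one_le_div_iff h.d_pos).2 h.d_le

theorem cfM_add_cfM_succ (h : IsCFState p (cfM p i) (cfD p i)) :
    cfM p i + cfM p (i + 1) = cfA p i * cfD p i := by
  have hfloor : Nat.sqrt p + cfM p i < cfA p i * cfD p i + cfD p i :=
    Nat.lt_div_mul_add h.d_pos
  have hd : cfD p i ≤ cfA p i * cfD p i := Nat.le_mul_of_pos_left _ h.one_le_cfA
  have hm := h.m_le
  rw [cfM_succ]
  omega

theorem cfD_mul_cfD_succ (h : IsCFState p (cfM p i) (cfD p i)) :
    cfD p i * cfD p (i + 1) = p - cfM p (i + 1) ^ 2 := by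
  have sq_le {x : ℕ} (hx : x ≤ Nat.sqrt p) : x ^ 2 ≤ p :=
    (Nat.pow_le_pow_left hx 2).trans (Nat.sqrt_le' p)
  rw [cfD_succ]
  exact Nat.mul_div_cancel' (dvd_sub_sq_of_add_eq_mul (sq_le h.m_le) (sq_le (cfM_succ_le p i))
    h.dvd h.cfM_add_cfM_succ)

theorem succ (hp : ¬IsSquare p) (h : IsCFState p (cfM p i) (cfD p i)) :
    IsCFState p (cfM p (i + 1)) (cfD p (i + 1)) ∧ Nat.sqrt p < cfM p (i + 1) + cfD p (i + 1) := by
  have hd : cfD p i ≤ cfM p i + cfM p (i + 1) :=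
    h.cfM_add_cfM_succ ▸ Nat.le_mul_of_pos_left _ h.one_le_cfA
  obtain ⟨hpos, hle, hlt⟩ := cf_denominator_bounds (Nat.sqrt_mul_self_lt_of_not_isSquare hp)
    (Nat.lt_succ_sqrt p) h.m_le (cfM_succ_le p i) (sqrt_lt_cfM_succ_add_cfD h.d_pos) hd
    h.cfD_mul_cfD_succ
  exact ⟨⟨hpos, cfM_succ_le p i, hle, Dvd.intro_left _ h.cfD_mul_cfD_succ⟩, hlt⟩

end IsCFState

theorem isCFState_cfState {p : ℕ} (hp : ¬IsSquare p) : ∀ i, IsCFState p (cfM p i) (cfD p i)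
  | 0 => by
    have : 0 < Nat.sqrt p := Nat.sqrt_pos.2 (Nat.pos_of_ne_zero (by rintro rfl; exact hp ⟨0, rfl⟩))
    exact ⟨Nat.one_pos, Nat.zero_le _, this, one_dvd _⟩
  | i + 1 => ((isCFState_cfState hp i).succ hp).1

theorem sqrt_lt_cfM_add_cfD {p i : ℕ} (hp : ¬IsSquare p) (hi : 0 < i) :
    Nat.sqrt p < cfM p i + cfD p i := by
  obtain ⟨j, rfl⟩ := Nat.exists_eq_add_one_of_ne_zero hi.ne'
  exact ((isCFState_cfState hp j).succ hp).2

theorem cfState_reflect {p l : ℕ} (hp : ¬IsSquare p) (hper : cfState p (l + 1) = cfState p 1) :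
    ∀ j < l, cfD p (l - j) = cfD p j ∧ cfM p (l - j) = cfM p (j + 1) := by
  have hI := isCFState_cfState hp
  have hM : cfM p (l + 1) = cfM p 1 := congrArg Prod.fst hper
  have hD : cfD p (l + 1) = cfD p 1 := congrArg Prod.snd hper
  intro j hj
  induction j with
  | zero =>
    have h₀ : cfD p 0 * cfD p 1 = p - cfM p 1 ^ 2 := (hI 0).cfD_mul_cfD_succ
    have hl := (hI l).cfD_mul_cfD_succ
    rw [hD, hM, ← h₀] at hl
    have hDl : cfD p l = 1 := Nat.eq_of_mul_eq_mul_right (hI 1).d_pos hl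
    have hM₁ : cfM p 1 = Nat.sqrt p := by simp [cfM, cfState]
    have hle := (hI l).m_le
    have hlt := sqrt_lt_cfM_add_cfD hp hj
    rw [Nat.sub_zero, zero_add]
    exact ⟨hDl, by omega⟩
  | succ j ih =>
    obtain ⟨hDj, hMj⟩ := ih (by omega)
    set i := l - (j + 1) with hi
    rw [show l - j = i + 1 by omega] at hDj hMj
    have hDi : cfD p i = cfD p (j + 1) := by
      refine Nat.eq_of_mul_eq_mul_right (hI j).d_pos ?_
      rw [← hDj, (hI i).cfD_mul_cfD_succ, hMj, ← (hI j).cfD_mul_cfD_succ, hDj, mul_comm]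
    have hA : cfA p i = cfA p (j + 1) := by
      have hsum := (hI i).cfM_add_cfM_succ
      have hwin := sqrt_lt_cfM_add_cfD hp (show 0 < i by omega)
      rw [hMj, hDi] at hsum
      rw [hDi] at hwin
      rw [cfA_eq p (j + 1), div_eq_of_add_eq_mul (hI i).m_le hwin hsum]
    have h₁ := (hI i).cfM_add_cfM_succ
    have h₂ := (hI (j + 1)).cfM_add_cfM_succ
    rw [hMj, hDi, hA] at h₁
    exact ⟨hDi, by omega⟩

theorem cfA_reflect {p l i : ℕ} (hp : ¬IsSquare p) (hper : cfState p (l + 1) = cfState p 1)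
    (hi : 0 < i) (hil : i < l) : cfA p (l - i) = cfA p i := by
  obtain ⟨hD, hM⟩ := cfState_reflect hp hper i hil
  have hI := isCFState_cfState hp i
  rw [cfA_eq, hD, hM]
  exact div_eq_of_add_eq_mul hI.m_le (sqrt_lt_cfM_add_cfD hp hi) hI.cfM_add_cfM_succ

theorem cfState_cfPeriod_succ {p : ℕ} (h : cfPeriod p ≠ 0) :
    cfState p (cfPeriod p + 1) = cfState p 1 :=
  (Nat.sInf_mem (Nat.nonempty_of_pos_sInf (Nat.pos_of_ne_zero h))).2

theorem cfH_eq_continuant (p : ℕ) : cfH p = continuant (cfA p) := by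
  funext n
  induction n using Nat.twoStepInduction with
  | zero => rfl
  | one => rfl
  | more n ih₁ ih₂ => rw [cfH, continuant, ih₁, ih₂]

theorem stmt2 (p : ℕ) (hp : p.Prime) (hl : Even (cfPeriod p)) :
    cfH p (cfPeriod p) =
      cfH p (cfPeriod p / 2) * (cfH p (cfPeriod p / 2 + 1) + cfH p (cfPeriod p / 2 - 1)) := by
  obtain ⟨m, hm⟩ := hl
  rcases eq_or_ne (cfPeriod p) 0 with h0 | h0
  · simp [h0, cfH]
  have hpal := fun i => cfA_reflect (i := i) hp.prime.not_isSquare (cfState_cfPeriod_succ h0)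
  rw [hm, ← two_mul] at hpal ⊢
  rw [Nat.mul_div_cancel_left m two_pos, cfH_eq_continuant]
  exact continuant_two_mul_of_palindrome _ m hpal
end

section
/- Let p be a prime with p ≡ 3 (mod 4), and let (x, y) be the fundamental solution of x² − p·y² = 1 (i.e., x + y√p is the fundamental unit of ℚ(√p)). Then either (x+1 = p·b² and x−1 = a² with a² − p·b² = −2) or (x+1 = a² and x−1 = p·b² with a² − p·b² = 2) for some positive integers a, b with y = a·b. -/
lemma coprime_mul_sq {u v c : ℤ} (hc : IsCoprime u v) (h : u * v = c ^ 2)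
    (hu : 0 < u) (hv : 0 < v) : ∃ a b : ℤ, 0 < a ∧ 0 < b ∧ u = a ^ 2 ∧ v = b ^ 2 := by
  obtain ⟨a, ha⟩ := Int.sq_of_isCoprime hc h
  obtain ⟨b, hb⟩ := Int.sq_of_isCoprime hc.symm (by rw [mul_comm]; exact h)
  have ha' : u = a ^ 2 := by
    rcases ha with h' | h'
    · exact h'
    · nlinarith [sq_nonneg a]
  have hb' : v = b ^ 2 := by
    rcases hb with h' | h'
    · exact h'
    · nlinarith [sq_nonneg b]
  refine ⟨|a|, |b|, abs_pos.mpr ?_, abs_pos.mpr ?_, by rw [sq_abs]; exact ha',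
    by rw [sq_abs]; exact hb'⟩
  · rintro rfl; rw [ha'] at hu; simp at hu
  · rintro rfl; rw [hb'] at hv; simp at hv

lemma mod4_no (p : ℕ) (h3 : p % 4 = 3) (a b : ℤ) : a ^ 2 - (p : ℤ) * b ^ 2 ≠ -1 := by
  intro h
  have h4 : ((a : ZMod 4)) ^ 2 - ((p : ℕ) : ZMod 4) * (b : ZMod 4) ^ 2 = -1 := by
    have := congrArg (fun z : ℤ => (z : ZMod 4)) h
    push_cast at this
    exact_mod_cast this
  have hp4 : ((p : ℕ) : ZMod 4) = 3 := by
    rw [← ZMod.natCast_mod, h3]; rfl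
  rw [hp4] at h4
  revert h4
  generalize (a : ZMod 4) = A
  generalize (b : ZMod 4) = B
  revert A B
  decide

set_option maxHeartbeats 1600000 in
theorem stmt3 (p : ℕ) (hp : p.Prime) (h3 : p % 4 = 3)
    (u : Pell.Solution₁ (p : ℤ)) (hu : Pell.IsFundamental u) :
    ∃ a b : ℤ, 0 < a ∧ 0 < b ∧ u.y = a * b ∧
      ((u.x + 1 = p * b ^ 2 ∧ u.x - 1 = a ^ 2 ∧ a ^ 2 - p * b ^ 2 = -2) ∨
       (u.x + 1 = a ^ 2 ∧ u.x - 1 = p * b ^ 2 ∧ a ^ 2 - p * b ^ 2 = 2)) := by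
  have hp' : Prime (p : ℤ) := Nat.prime_iff_prime_int.mp hp
  have hprop := u.prop
  have hx1 : 1 < u.x := hu.1
  have hy0 : 0 < u.y := hu.2.1
  set x := u.x with hxdef
  set y := u.y with hydef
  have hpy : (x - 1) * (x + 1) = (p : ℤ) * y ^ 2 := by ring_nf; nlinarith [hprop]
  have hp2 : 2 ≤ p := hp.two_le
  have hpp : (0 : ℤ) < p := by exact_mod_cast hp.pos
  have hpp2 : (2 : ℤ) ≤ p := by exact_mod_cast hp2
  rcases Int.even_or_odd x with hxe | hxo
  · -- x even
    have hcop : IsCoprime (x - 1) (x + 1) := by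
      obtain ⟨k, hk⟩ := hxe
      exact ⟨-k - 1, k, by rw [hk]; ring⟩
    have hdvd : (p : ℤ) ∣ (x - 1) * (x + 1) := ⟨y ^ 2, hpy⟩
    rcases hp'.dvd_mul.mp hdvd with hd | hd
    · -- p ∣ x - 1 : right disjunct
      obtain ⟨w, hw⟩ := hd
      have hw0 : 0 < w := by nlinarith [hpp]
      have hwy : (x + 1) * w = y ^ 2 := by
        have : (p : ℤ) * ((x + 1) * w) = (p : ℤ) * y ^ 2 := by rw [← hpy, hw]; ring
        exact mul_left_cancel₀ (by positivity) this
      have hcop2 : IsCoprime (x + 1) w := (hcop.symm).of_isCoprime_of_dvd_right ⟨p, by rw [hw]; ring⟩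
      obtain ⟨a, b, ha0, hb0, hua, hvb⟩ := coprime_mul_sq hcop2 hwy (by linarith) hw0
      refine ⟨a, b, ha0, hb0, ?_, Or.inr ⟨hua, by rw [hw, hvb], ?_⟩⟩
      · have hsq : y ^ 2 = (a * b) ^ 2 := by rw [← hwy, hua, hvb]; ring
        have h0 : (y - a * b) * (y + a * b) = 0 := by linear_combination hsq
        rcases mul_eq_zero.mp h0 with h | h
        · linarith
        · nlinarith
      · have : x - 1 = (p : ℤ) * b ^ 2 := by rw [hw, hvb]
        linarith [hua, this]
    · -- p ∣ x + 1 : left disjunct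
      obtain ⟨w, hw⟩ := hd
      have hw0 : 0 < w := by nlinarith [hpp]
      have hwy : (x - 1) * w = y ^ 2 := by
        have : (p : ℤ) * ((x - 1) * w) = (p : ℤ) * y ^ 2 := by rw [← hpy, hw]; ring
        exact mul_left_cancel₀ (by positivity) this
      have hcop2 : IsCoprime (x - 1) w := hcop.of_isCoprime_of_dvd_right ⟨p, by rw [hw]; ring⟩
      obtain ⟨a, b, ha0, hb0, hua, hvb⟩ := coprime_mul_sq hcop2 hwy (by linarith) hw0
      refine ⟨a, b, ha0, hb0, ?_, Or.inl ⟨by rw [hw, hvb], hua, ?_⟩⟩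
      · have hsq : y ^ 2 = (a * b) ^ 2 := by rw [← hwy, hua, hvb]; ring
        have h0 : (y - a * b) * (y + a * b) = 0 := by linear_combination hsq
        rcases mul_eq_zero.mp h0 with h | h
        · linarith
        · nlinarith
      · have : x + 1 = (p : ℤ) * b ^ 2 := by rw [hw, hvb]
        linarith [hua, this]
  · -- x odd : derive contradiction
    exfalso
    have hpodd : Odd (p : ℤ) := by
      have h1 : Odd p := Nat.odd_iff.mpr (by omega)
      exact_mod_cast h1
    have hyeven : Even y := by
      rcases Int.even_or_odd y with h | h
      · exact h
      · exfalso
        have hx2 : Odd (x ^ 2) := hxo.pow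
        have hy2 : Odd ((p : ℤ) * y ^ 2) := hpodd.mul h.pow
        have heven : Even (x ^ 2 - (p : ℤ) * y ^ 2) := Odd.sub_odd hx2 hy2
        rw [hprop] at heven
        simp at heven
    obtain ⟨t, ht⟩ := hyeven
    obtain ⟨m, hm⟩ := hxo
    have hm1 : 1 ≤ m := by omega
    have ht0 : 0 < t := by omega
    have hmm : m * (m + 1) = (p : ℤ) * t ^ 2 := by
      have h4 : (2 * m + 1) ^ 2 - (p : ℤ) * (t + t) ^ 2 = 1 := by rw [← hm, ← ht]; exact hprop
      nlinarith [h4]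
    have hcop : IsCoprime m (m + 1) := ⟨-1, 1, by ring⟩
    have hdvd : (p : ℤ) ∣ m * (m + 1) := ⟨t ^ 2, hmm⟩
    rcases hp'.dvd_mul.mp hdvd with hd | hd
    · -- p ∣ m : then m = p w, (m+1) w = t², m+1 = a², w = b², a² - p b² = 1, descent
      obtain ⟨w, hw⟩ := hd
      have hw0 : 0 < w := by nlinarith [hpp]
      have hwy : (m + 1) * w = t ^ 2 := by
        have : (p : ℤ) * ((m + 1) * w) = (p : ℤ) * t ^ 2 := by rw [← hmm, hw]; ring
        exact mul_left_cancel₀ (by positivity) this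
      have hcop2 : IsCoprime (m + 1) w :=
        (hcop.symm).of_isCoprime_of_dvd_right ⟨p, by rw [hw]; ring⟩
      obtain ⟨a, b, ha0, hb0, hua, hvb⟩ := coprime_mul_sq hcop2 hwy (by linarith) hw0
      -- solution (a, b) with a² - p b² = 1
      have hsol : a ^ 2 - (p : ℤ) * b ^ 2 = 1 := by
        have : m = (p : ℤ) * b ^ 2 := by rw [hw, hvb]
        linarith [hua]
      have hmpb : m = (p : ℤ) * b ^ 2 := by rw [hw, hvb]
      have hb1 : 1 ≤ b ^ 2 := by nlinarith [hb0]
      have hpb : (p : ℤ) * 1 ≤ (p : ℤ) * b ^ 2 := mul_le_mul_of_nonneg_left hb1 (le_of_lt hpp)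
      have ha3 : 3 ≤ a ^ 2 := by rw [← hua, hmpb]; linarith
      have ha2 : 2 ≤ a := by
        by_contra hcon
        push_neg at hcon
        interval_cases a
        omega
      have hlt : 1 < (Pell.Solution₁.mk a b hsol).x := by
        simp only [Pell.Solution₁.x_mk]; linarith
      have hxa := hu.2.2 hlt
      simp only [Pell.Solution₁.x_mk] at hxa
      have hxa' : x ≤ a := hxa
      nlinarith [hua]
    · -- p ∣ m + 1 : a² - p b² = -1, impossible mod 4
      obtain ⟨w, hw⟩ := hd
      have hw0 : 0 < w := by nlinarith [hpp]
      have hwy : m * w = t ^ 2 := by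
        have : (p : ℤ) * (m * w) = (p : ℤ) * t ^ 2 := by rw [← hmm, hw]; ring
        exact mul_left_cancel₀ (by positivity) this
      have hcop2 : IsCoprime m w := hcop.of_isCoprime_of_dvd_right ⟨p, by rw [hw]; ring⟩
      obtain ⟨a, b, ha0, hb0, hua, hvb⟩ := coprime_mul_sq hcop2 hwy (by linarith) hw0
      have hsol : a ^ 2 - (p : ℤ) * b ^ 2 = -1 := by
        have : m + 1 = (p : ℤ) * b ^ 2 := by rw [hw, hvb]
        linarith [hua]
      exact mod4_no p h3 a b hsol
end

section
/- Let p be a prime with p ≡ 3 (mod 4), let √p = ⟨n; a₁, …, a_{l−1}, 2n⟩ with convergent denominators h_i, and let x + y√p be the fundamental unit of ℚ(√p). Then (h_{l/2} + h_{l/2−2})² − p·h_{l/2−1}² = (−1)^{(p+1)/4}·2; that is, the factorization y = a·b with a² − p·b² = ±2 satisfies a = h_{l/2} + h_{l/2−2} and b = h_{l/2−1}. -/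
namespace CF7

set_option linter.unusedSectionVars false
set_option maxHeartbeats 1000000

/-- numerators of convergents, with `cfG p 0 = g₋₁ = 1`, `cfG p 1 = g₀ = ⌊√p⌋`. -/
def cfG (p : ℕ) : ℕ → ℕ
  | 0 => 1
  | 1 => Nat.sqrt p
  | i + 2 => cfA p (i + 1) * cfG p (i + 1) + cfG p i

def mm (p i : ℕ) : ℕ := (cfState p i).1
def dd (p i : ℕ) : ℕ := (cfState p i).2

noncomputable def sq (p : ℕ) : ℝ := Real.sqrt p

/-- the step function of the continued fraction algorithm -/
def stepPair (p : ℕ) (md : ℕ × ℕ) : ℕ × ℕ :=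
  ((Nat.sqrt p + md.1) / md.2 * md.2 - md.1,
    (p - ((Nat.sqrt p + md.1) / md.2 * md.2 - md.1) ^ 2) / md.2)

lemma cfState_succ (p i : ℕ) : cfState p (i + 1) = stepPair p (cfState p i) := rfl

lemma mm_succ (p i : ℕ) : mm p (i+1) = cfA p i * dd p i - mm p i := rfl
lemma dd_succ (p i : ℕ) : dd p (i+1) = (p - (cfA p i * dd p i - mm p i)^2) / dd p i := rfl

lemma mm_zero (p : ℕ) : mm p 0 = 0 := rfl
lemma dd_zero (p : ℕ) : dd p 0 = 1 := rfl

/-- reduced-state invariant -/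
def Red (p i : ℕ) : Prop :=
  1 ≤ mm p i ∧ mm p i ≤ Nat.sqrt p ∧ 1 ≤ dd p i ∧
    (dd p i : ℝ) < sq p + mm p i ∧ sq p < mm p i + dd p i

/-- chain identities linking consecutive states -/
def Chain (p i : ℕ) : Prop :=
  (dd p i : ℤ) * dd p (i+1) = (p : ℤ) - (mm p (i+1) : ℤ)^2 ∧
    (mm p i : ℤ) + (mm p (i+1) : ℤ) = (cfA p i : ℤ) * (dd p i : ℤ)

section Basic

lemma sq_sq (p : ℕ) : sq p ^ 2 = p := Real.sq_sqrt (by positivity)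

lemma sq_nonneg' (p : ℕ) : 0 ≤ sq p := Real.sqrt_nonneg _

lemma sq_lt_n (p : ℕ) : sq p < (Nat.sqrt p : ℝ) + 1 := by
  have := Nat.lt_succ_sqrt' p
  have h2 : (p : ℝ) < ((Nat.sqrt p : ℝ) + 1) ^ 2 := by
    have : (p : ℝ) < ((Nat.sqrt p + 1) * (Nat.sqrt p + 1) : ℕ) := by
      have h0 : p < (Nat.sqrt p + 1) * (Nat.sqrt p + 1) := by
        have := Nat.lt_succ_sqrt p
        nlinarith [Nat.lt_succ_sqrt p]
      exact_mod_cast h0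
    calc (p : ℝ) < ((Nat.sqrt p + 1) * (Nat.sqrt p + 1) : ℕ) := this
    _ = ((Nat.sqrt p : ℝ) + 1) ^ 2 := by push_cast; ring
  have := Real.sqrt_lt_sqrt (by positivity) h2
  rwa [Real.sqrt_sq (by positivity)] at this


variable {p : ℕ} (hp : p.Prime) (h3 : p % 4 = 3)
include hp

lemma irr : Irrational (sq p) := Nat.Prime.irrational_sqrt hp

lemma n_lt_sq : (Nat.sqrt p : ℝ) < sq p := by
  have h1 : (Nat.sqrt p : ℝ) ≤ sq p := by
    rw [show ((Nat.sqrt p : ℕ) : ℝ) = Real.sqrt ((Nat.sqrt p ^ 2 : ℕ) : ℝ) by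
      push_cast
      rw [Real.sqrt_sq (by positivity)]]
    exact Real.sqrt_le_sqrt (by exact_mod_cast Nat.sqrt_le' p |>.trans_eq (by ring))
  refine h1.lt_of_ne fun h => ?_
  exact (irr hp).ne_int (Nat.sqrt p) (by rw [← h]; push_cast; rfl)

lemma sq_pos : 0 < sq p := Real.sqrt_pos.2 (by exact_mod_cast hp.pos)

lemma coeff_match {A B C D : ℤ} (h : (A : ℝ) + B * sq p = C + D * sq p) :
    A = C ∧ B = D := by
  by_cases hBD : B = D
  · subst hBD
    constructor
    · have : (A : ℝ) = C := by linarith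
      exact_mod_cast this
    · rfl
  · exfalso
    have hBD' : (D : ℝ) - B ≠ 0 := by
      intro hc
      apply hBD
      have : (B : ℝ) = D := by linarith
      exact_mod_cast this
    have hsq : sq p = ((A - C : ℤ) : ℝ) / ((D - B : ℤ) : ℝ) := by
      push_cast
      field_simp
      linarith
    exact (irr hp) ⟨((A - C : ℤ) : ℚ) / ((D - B : ℤ) : ℚ), by
      rw [hsq]; push_cast; ring⟩

include h3

lemma n_pos : 1 ≤ Nat.sqrt p := by
  have : 1 * 1 ≤ p := by omega
  exact Nat.le_sqrt.2 this

lemma nsq_lt : Nat.sqrt p ^ 2 < p := by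
  rcases Nat.lt_or_ge (Nat.sqrt p ^ 2) p with h | h
  · exact h
  · exfalso
    have h2 : Nat.sqrt p ^ 2 ≤ p := Nat.sqrt_le' p
    have : p = Nat.sqrt p ^ 2 := le_antisymm h h2
    exact (Nat.Prime.irrational_sqrt hp) ⟨(Nat.sqrt p : ℚ), by
      rw [show ((p : ℕ) : ℝ) = ((Nat.sqrt p : ℝ)) ^ 2 by exact_mod_cast congrArg (Nat.cast : ℕ → ℝ) this]
      rw [Real.sqrt_sq (by positivity)]
      push_cast; rfl⟩

end Basic

section Master

variable {p : ℕ} (hp : p.Prime) (h3 : p % 4 = 3)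
include hp h3

omit hp h3 in
lemma mm_one : mm p 1 = Nat.sqrt p := by
  simp [mm, cfState]

omit hp h3 in
lemma dd_one : dd p 1 = p - Nat.sqrt p ^ 2 := by
  simp [dd, cfState]

omit hp h3 in
lemma cfA_zero : cfA p 0 = Nat.sqrt p := by
  simp [cfA, cfState]

lemma base : Red p 1 ∧ Chain p 0 := by
  have hn := n_pos hp h3
  have hnsq := nsq_lt hp h3
  have h1 := n_lt_sq hp
  have h2 := sq_lt_n p
  have h3' := sq_sq p
  have hm1 := mm_one (p := p)
  have hd1 := dd_one (p := p)
  have hNpos : 1 ≤ p - Nat.sqrt p ^ 2 := by omega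
  have hNR : ((p - Nat.sqrt p ^ 2 : ℕ) : ℝ) = (p : ℝ) - (Nat.sqrt p : ℝ) ^ 2 := by
    push_cast [Nat.cast_sub hnsq.le]
    ring
  constructor
  · refine ⟨by omega, by omega, by omega, ?_, ?_⟩
    · rw [hm1, hd1, hNR]
      have hc : (1:ℝ) ≤ (Nat.sqrt p : ℝ) := by exact_mod_cast hn
      nlinarith
    · rw [hm1, hd1, hNR]
      have hc : (1:ℝ) ≤ (Nat.sqrt p : ℝ) := by exact_mod_cast hn
      nlinarith [mul_pos (sub_pos.mpr h1) (show (0:ℝ) < sq p + (Nat.sqrt p : ℝ) - 1 by linarith)]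
  · constructor
    · rw [mm_one, dd_zero, dd_one]
      push_cast [Nat.cast_sub hnsq.le]
      ring
    · rw [mm_one, mm_zero, cfA_zero, dd_zero]
      push_cast
      ring

lemma step (j : ℕ) (hred : Red p j)
    (hdvd : (dd p j : ℤ) ∣ (p : ℤ) - (mm p j : ℤ)^2) :
    Red p (j+1) ∧ Chain p j := by
  obtain ⟨hm1, hmn, hd1, hdlt, hsqlt⟩ := hred
  set n := Nat.sqrt p with hn_def
  set m := mm p j with hm_def
  set d := dd p j with hd_def
  set a := cfA p j with ha_def
  have hn := n_pos hp h3
  have hnsq := nsq_lt hp h3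
  have hS1 := n_lt_sq hp
  have hS2 := sq_lt_n p
  have hSsq := sq_sq p
  have hSpos := sq_pos hp
  have hnR : (1 : ℝ) ≤ (n : ℝ) := by exact_mod_cast hn
  -- d ≤ n + m
  have hdnm : d ≤ n + m := by
    have : (d : ℝ) < (n : ℝ) + m + 1 := by push_cast; nlinarith
    exact_mod_cast Nat.lt_add_one_iff.mp (by exact_mod_cast this)
  have ha1 : 1 ≤ a := (Nat.one_le_div_iff hd1).2 hdnm
  have haq : a = (n + m) / d := rfl
  have had_le : a * d ≤ n + m := by rw [haq]; exact Nat.div_mul_le_self _ _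
  have had_gt : n + m < a * d + d := by
    conv_lhs => rw [← Nat.div_add_mod (n + m) d]
    rw [haq, mul_comm]
    exact Nat.add_lt_add_left (Nat.mod_lt _ hd1) _
  have hda : d ≤ a * d := Nat.le_mul_of_pos_left d ha1
  have hM1 : m < a * d := by
    rcases le_or_gt d m with h | h
    · have h1 : n < a * d := by linarith
      linarith
    · linarith
  have hMn : a * d - m ≤ n := by
    have : a * d ≤ n + m := had_le
    omega
  set M := a * d - m with hM_def
  have hmm_succ : mm p (j+1) = M := rfl
  have hMZ : (M : ℤ) = (a : ℤ) * d - m := by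
    rw [hM_def, Nat.cast_sub hM1.le]
    push_cast
    ring
  have hMR : (M : ℝ) = (a : ℝ) * d - m := by
    have h0 : ((M : ℤ) : ℝ) = (((a : ℤ) * d - m : ℤ) : ℝ) := by rw [hMZ]
    push_cast at h0
    linarith
  have hMsq_lt : M ^ 2 < p := lt_of_le_of_lt (Nat.pow_le_pow_left hMn 2) hnsq
  -- divisibility
  have hdvdM : (d : ℤ) ∣ (p : ℤ) - (M : ℤ)^2 := by
    have h1 : (d : ℤ) ∣ ((M : ℤ) + m) := ⟨a, by rw [hMZ]; ring⟩
    have h2 : (p : ℤ) - (M : ℤ)^2 = ((p : ℤ) - (m : ℤ)^2) - ((M : ℤ) + m) * ((M : ℤ) - m) := by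
      ring
    rw [h2]
    exact dvd_sub hdvd (h1.mul_right _)
  have hdvdN : d ∣ p - M ^ 2 := by
    have h0 : (d : ℤ) ∣ ((p - M ^ 2 : ℕ) : ℤ) := by
      rwa [Nat.cast_sub hMsq_lt.le, Nat.cast_pow]
    exact_mod_cast h0
  set D := (p - M ^ 2) / d with hD_def
  have hdd_succ : dd p (j+1) = D := rfl
  have hDexact : D * d = p - M ^ 2 := Nat.div_mul_cancel hdvdN
  have hD1 : 1 ≤ D := by
    rcases Nat.eq_zero_or_pos D with h | h
    · exfalso
      rw [h] at hDexact
      omega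
    · exact h
  -- real facts
  set S := sq p
  have hmS : (m : ℝ) < S := by
    have : (m : ℝ) ≤ n := by exact_mod_cast hmn
    linarith
  have hfl : (M : ℝ) < S := by
    rw [hMR]
    have : (a : ℝ) * d ≤ (n : ℝ) + m := by exact_mod_cast had_le
    linarith
  have hfg : S - (M : ℝ) < d := by
    rw [hMR]
    have : (n : ℝ) + m + 1 ≤ (a : ℝ) * d + d := by exact_mod_cast had_gt
    linarith
  have hdSM : (d : ℝ) < S + M := by
    rw [hMR]
    have : (d : ℝ) ≤ (a : ℝ) * d := by exact_mod_cast hda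
    linarith
  have hdDR : (d : ℝ) * D = (S - M) * (S + M) := by
    have h0 : ((D * d : ℕ) : ℝ) = ((p - M ^ 2 : ℕ) : ℝ) := by rw [hDexact]
    rw [Nat.cast_mul, Nat.cast_sub hMsq_lt.le] at h0
    push_cast at h0
    nlinarith
  have hdR : (0 : ℝ) < d := by exact_mod_cast hd1
  have hMR0 : (0 : ℝ) ≤ (M : ℝ) := by positivity
  have hSMpos : (0 : ℝ) < S + M := by positivity
  have hSMpos' : (0 : ℝ) < S - M := by linarith
  constructor
  · refine ⟨?_, ?_, ?_, ?_, ?_⟩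
    · rw [hmm_succ]; omega
    · rw [hmm_succ]; exact hMn
    · rw [hdd_succ]; exact hD1
    · rw [hmm_succ, hdd_succ]
      nlinarith
    · rw [hmm_succ, hdd_succ]
      nlinarith
  · constructor
    · rw [hmm_succ, hdd_succ]
      have h0 : ((D * d : ℕ) : ℤ) = ((p - M ^ 2 : ℕ) : ℤ) := by rw [hDexact]
      rw [Nat.cast_mul, Nat.cast_sub hMsq_lt.le] at h0
      push_cast at h0 ⊢
      linarith
    · rw [hmm_succ]
      have : (M : ℤ) = (a : ℤ) * d - m := hMZ
      push_cast
      linarith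

lemma master : ∀ i, Red p (i+1) ∧ Chain p i := by
  intro i
  induction i with
  | zero => exact base hp h3
  | succ j ih =>
    obtain ⟨hred, hch⟩ := ih
    have hdvd : (dd p (j+1) : ℤ) ∣ (p : ℤ) - (mm p (j+1) : ℤ)^2 := by
      exact ⟨dd p j, by linarith [hch.1, mul_comm (dd p j : ℤ) (dd p (j+1) : ℤ)]⟩
    exact step hp h3 (j+1) hred hdvd

lemma red {i : ℕ} (hi : 1 ≤ i) : Red p i := by
  obtain ⟨j, rfl⟩ := Nat.exists_eq_add_of_le hi
  simpa [Nat.add_comm] using (master hp h3 j).1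

lemma chain (i : ℕ) : Chain p i := (master hp h3 i).2

lemma dd_pos (i : ℕ) : 1 ≤ dd p i := by
  cases i with
  | zero => exact le_refl 1
  | succ j => exact (red hp h3 (Nat.le_add_left 1 j)).2.2.1

lemma a_pos {i : ℕ} (hi : 1 ≤ i) : 1 ≤ cfA p i := by
  obtain ⟨hm1, hmn, hd1, hdlt, hsqlt⟩ := red hp h3 hi
  have hS2 := sq_lt_n p
  have hdnm : dd p i ≤ Nat.sqrt p + mm p i := by
    have : (dd p i : ℝ) < (Nat.sqrt p : ℝ) + mm p i + 1 := by nlinarith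
    exact_mod_cast Nat.lt_add_one_iff.mp (by exact_mod_cast this)
  exact (Nat.one_le_div_iff hd1).2 hdnm

lemma dd_le (i : ℕ) (hi : 1 ≤ i) : dd p i ≤ 2 * Nat.sqrt p := by
  obtain ⟨hm1, hmn, hd1, hdlt, hsqlt⟩ := red hp h3 hi
  have hS2 := sq_lt_n p
  have : (dd p i : ℝ) < 2 * (Nat.sqrt p : ℝ) + 1 := by
    have : (mm p i : ℝ) ≤ Nat.sqrt p := by exact_mod_cast hmn
    nlinarith
  exact_mod_cast Nat.lt_add_one_iff.mp (by exact_mod_cast this)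

end Master

section Xi

variable {p : ℕ} (hp : p.Prime) (h3 : p % 4 = 3)

noncomputable def xi (p i : ℕ) : ℝ := (sq p + mm p i) / dd p i
include hp h3

omit hp h3 in
lemma cfH_succ (n : ℕ) : cfH p (n+2) = cfA p (n+1) * cfH p (n+1) + cfH p n := rfl

omit hp h3 in
lemma cfG_succ (n : ℕ) : cfG p (n+2) = cfA p (n+1) * cfG p (n+1) + cfG p n := rfl

omit hp h3 in
lemma cfH_zero : cfH p 0 = 0 := rfl
omit hp h3 in
lemma cfH_one : cfH p 1 = 1 := rfl
omit hp h3 in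
lemma cfG_zero : cfG p 0 = 1 := rfl
omit hp h3 in
lemma cfG_one : cfG p 1 = Nat.sqrt p := rfl

lemma xi_pos (i : ℕ) : 0 < xi p i := by
  have h1 := dd_pos hp h3 i
  have h2 := sq_pos hp
  have : (0:ℝ) < dd p i := by exact_mod_cast h1
  exact div_pos (by positivity) this

lemma xi_gt_one {i : ℕ} (hi : 1 ≤ i) : 1 < xi p i := by
  obtain ⟨hm1, hmn, hd1, hdlt, hsqlt⟩ := red hp h3 hi
  have : (0:ℝ) < dd p i := by exact_mod_cast hd1
  rw [xi, lt_div_iff₀ this]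
  linarith

lemma xi_ne (i : ℕ) : xi p i ≠ 0 := ne_of_gt (xi_pos hp h3 i)

lemma xi_rec (i : ℕ) : xi p i = cfA p i + 1 / xi p (i+1) := by
  obtain ⟨hdd, hmm⟩ := chain hp h3 i
  have hd1 : (0:ℝ) < dd p i := by exact_mod_cast dd_pos hp h3 i
  have hd2 : (0:ℝ) < dd p (i+1) := by exact_mod_cast dd_pos hp h3 (i+1)
  have hSsq := sq_sq p
  have hSpos := sq_pos hp
  have hSm : (0:ℝ) < sq p + mm p (i+1) := by positivity
  have hddR : (dd p i : ℝ) * dd p (i+1) = (p:ℝ) - (mm p (i+1):ℝ)^2 := by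
    exact_mod_cast congrArg (Int.cast : ℤ → ℝ) hdd
  have hmmR : (mm p i : ℝ) + mm p (i+1) = (cfA p i : ℝ) * dd p i := by
    exact_mod_cast congrArg (Int.cast : ℤ → ℝ) hmm
  have key : (sq p + (mm p i:ℝ)) * (sq p + (mm p (i+1):ℝ)) =
      ((cfA p i : ℝ) * (sq p + (mm p (i+1):ℝ)) + dd p (i+1)) * dd p i := by
    linear_combination hSsq - hddR + (sq p + (mm p (i+1):ℝ)) * hmmR
  have hrhs : (cfA p i : ℝ) + dd p (i+1) / (sq p + (mm p (i+1):ℝ)) =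
      ((cfA p i : ℝ) * (sq p + (mm p (i+1):ℝ)) + dd p (i+1)) / (sq p + (mm p (i+1):ℝ)) := by
    field_simp
  rw [show xi p i = (sq p + (mm p i:ℝ))/dd p i from rfl,
    show xi p (i+1) = (sq p + (mm p (i+1):ℝ))/dd p (i+1) from rfl, one_div_div, hrhs,
    div_eq_div_iff (ne_of_gt hd1) (ne_of_gt hSm)]
  linear_combination key

lemma star : ∀ n : ℕ,
    sq p * (cfH p (n+1) * xi p (n+1) + cfH p n) =
      cfG p (n+1) * xi p (n+1) + cfG p n := by
  intro n
  induction n with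
  | zero =>
    have h1 := mm_one (p := p)
    have h2 := dd_one (p := p)
    have hnsq := nsq_lt hp h3
    have hSsq := sq_sq p
    have hd1 : (0:ℝ) < dd p 1 := by exact_mod_cast dd_pos hp h3 1
    have hdR : (dd p 1 : ℝ) = (p:ℝ) - (Nat.sqrt p : ℝ)^2 := by
      rw [h2]
      push_cast [Nat.cast_sub hnsq.le]
      ring
    rw [cfH_one, cfH_zero, cfG_one, cfG_zero]
    rw [show xi p 1 = (sq p + mm p 1) / dd p 1 from rfl, h1]
    push_cast
    rw [mul_comm, one_mul, add_zero, mul_comm ((Nat.sqrt p : ℝ)) _, div_mul_eq_mul_div,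
      div_mul_eq_mul_div, div_add' _ _ _ (ne_of_gt hd1), div_eq_div_iff (ne_of_gt hd1) (ne_of_gt hd1)]
    rw [hdR]
    ring_nf
    nlinarith [hSsq]
  | succ k ih =>
    have hrec := xi_rec hp h3 (k+1)
    have hx2 := xi_ne hp h3 (k+2)
    have hxx : xi p (k+1) * xi p (k+2) = cfA p (k+1) * xi p (k+2) + 1 := by
      rw [hrec]
      field_simp
    rw [cfH_succ, cfG_succ]
    push_cast
    linear_combination (xi p (k+2)) * ih +
      ((cfG p (k+1) : ℝ) - sq p * (cfH p (k+1) : ℝ)) * hxx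

lemma Rboth (n : ℕ) :
    ((p : ℤ) * cfH p (n+1) = cfG p (n+1) * mm p (n+1) + cfG p n * dd p (n+1)) ∧
    ((cfG p (n+1) : ℤ) = cfH p (n+1) * mm p (n+1) + cfH p n * dd p (n+1)) := by
  have hstar := star hp h3 n
  have hd2 : (0:ℝ) < dd p (n+1) := by exact_mod_cast dd_pos hp h3 (n+1)
  have hSsq := sq_sq p
  have hu : xi p (n+1) * dd p (n+1) = sq p + mm p (n+1) := by
    rw [show xi p (n+1) = (sq p + (mm p (n+1):ℝ))/dd p (n+1) from rfl]
    exact div_mul_cancel₀ _ (ne_of_gt hd2)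
  have hkey : (((p : ℤ) * cfH p (n+1) : ℤ) : ℝ) +
      ((cfH p (n+1) * mm p (n+1) + cfH p n * dd p (n+1) : ℤ) : ℝ) * sq p =
      ((cfG p (n+1) * mm p (n+1) + cfG p n * dd p (n+1) : ℤ) : ℝ) +
      ((cfG p (n+1) : ℤ) : ℝ) * sq p := by
    push_cast
    linear_combination (dd p (n+1) : ℝ) * hstar -
      (sq p * (cfH p (n+1) : ℝ) - (cfG p (n+1) : ℝ)) * hu - (cfH p (n+1) : ℝ) * hSsq
  have h := coeff_match hp hkey
  exact ⟨h.1, h.2.symm⟩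

lemma Rtwo (n : ℕ) :
    (cfG p (n+1) : ℤ) = cfH p (n+1) * mm p (n+1) + cfH p n * dd p (n+1) :=
  (Rboth hp h3 n).2

omit hp h3 in
lemma det (n : ℕ) :
    (cfG p (n+1) : ℤ) * cfH p n - (cfG p n : ℤ) * cfH p (n+1) = (-1)^(n+1) := by
  induction n with
  | zero => simp [cfG_one, cfG_zero, cfH_one, cfH_zero]
  | succ k ih =>
    rw [cfG_succ, cfH_succ]
    push_cast
    rw [pow_succ]
    linear_combination (-1 : ℤ) * ih

lemma norm' (n : ℕ) :
    (cfG p (n+1) : ℤ)^2 - p * (cfH p (n+1) : ℤ)^2 = (-1)^(n+1) * dd p (n+1) := by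
  obtain ⟨hR1, hR2⟩ := Rboth hp h3 n
  have hdet := det (p := p) n
  linear_combination (cfG p (n+1) : ℤ) * hR2 - (cfH p (n+1) : ℤ) * hR1 +
    (dd p (n+1) : ℤ) * hdet

end Xi

section Period

variable {p : ℕ} (hp : p.Prime) (h3 : p % 4 = 3)
include hp h3

lemma eta_bound {i : ℕ} (hi : 1 ≤ i) :
    (cfA p i : ℝ) ≤ (sq p + mm p (i+1)) / dd p i ∧
      (sq p + mm p (i+1)) / dd p i < cfA p i + 1 := by
  obtain ⟨hm1, hmn, hd1, hdlt, hsqlt⟩ := red hp h3 hi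
  obtain ⟨hdd, hmm⟩ := chain hp h3 i
  have hd1R : (0:ℝ) < dd p i := by exact_mod_cast hd1
  have hmmR : (mm p i : ℝ) + mm p (i+1) = (cfA p i : ℝ) * dd p i := by
    exact_mod_cast congrArg (Int.cast : ℤ → ℝ) hmm
  have hS1 := n_lt_sq hp
  have hmS : (mm p i : ℝ) < sq p := by
    have : (mm p i : ℝ) ≤ Nat.sqrt p := by exact_mod_cast hmn
    linarith
  constructor
  · rw [le_div_iff₀ hd1R]
    nlinarith
  · rw [div_lt_iff₀ hd1R]
    nlinarith

omit hp h3 in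
lemma state_eq {i j : ℕ} (hm : mm p i = mm p j) (hd : dd p i = dd p j) :
    cfState p i = cfState p j := by
  have h1 : cfState p i = (mm p i, dd p i) := rfl
  have h2 : cfState p j = (mm p j, dd p j) := rfl
  rw [h1, h2, hm, hd]

lemma back {i j : ℕ} (hi : 1 ≤ i) (hj : 1 ≤ j)
    (h : cfState p (i+1) = cfState p (j+1)) : cfState p i = cfState p j := by
  have hmm' : mm p (i+1) = mm p (j+1) := by rw [mm, mm, h]
  have hdd' : dd p (i+1) = dd p (j+1) := by rw [dd, dd, h]
  have hchi := chain hp h3 i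
  have hchj := chain hp h3 j
  have hd1 : 1 ≤ dd p (i+1) := dd_pos hp h3 (i+1)
  have hdeq : dd p i = dd p j := by
    have h1 := hchi.1
    have h2 := hchj.1
    rw [← hmm', ← hdd'] at h2
    have : (dd p i : ℤ) * dd p (i+1) = (dd p j : ℤ) * dd p (i+1) := by omega
    have h3' : (dd p (i+1) : ℤ) ≠ 0 := by exact_mod_cast Nat.one_le_iff_ne_zero.mp hd1
    exact_mod_cast mul_right_cancel₀ h3' this
  have haeq : cfA p i = cfA p j := by
    obtain ⟨hl1, hu1⟩ := eta_bound hp h3 hi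
    obtain ⟨hl2, hu2⟩ := eta_bound hp h3 hj
    rw [← hmm', ← hdeq] at hl2 hu2
    have e1 : (cfA p i : ℝ) < cfA p j + 1 := lt_of_le_of_lt hl1 hu2
    have e2 : (cfA p j : ℝ) < cfA p i + 1 := lt_of_le_of_lt hl2 hu1
    have e1' : cfA p i < cfA p j + 1 := by exact_mod_cast e1
    have e2' : cfA p j < cfA p i + 1 := by exact_mod_cast e2
    omega
  have hmeq : mm p i = mm p j := by
    have h1 := hchi.2
    have h2 := hchj.2
    rw [← hmm', ← hdeq, ← haeq] at h2
    omega
  exact state_eq hmeq hdeq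

lemma back_iter : ∀ k {i j : ℕ}, 1 ≤ i → 1 ≤ j →
    cfState p (i+k) = cfState p (j+k) → cfState p i = cfState p j := by
  intro k
  induction k with
  | zero => intro i j _ _ h; simpa using h
  | succ t ih =>
    intro i j hi hj h
    apply ih hi hj
    have := back hp h3 (by omega : 1 ≤ i + t) (by omega : 1 ≤ j + t)
    apply this
    convert h using 2 <;> omega

lemma period_set_nonempty :
    {l | 0 < l ∧ cfState p (l + 1) = cfState p 1}.Nonempty := by
  have hbm : ∀ i : ℕ, mm p (i+1) ≤ Nat.sqrt p := fun i => (red hp h3 (by omega)).2.1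
  have hbd : ∀ i : ℕ, dd p (i+1) ≤ 2 * Nat.sqrt p := fun i => dd_le hp h3 (i+1) (by omega)
  set f : ℕ → Fin (Nat.sqrt p + 1) × Fin (2 * Nat.sqrt p + 1) :=
    fun i => (⟨mm p (i+1), by have := hbm i; omega⟩, ⟨dd p (i+1), by have := hbd i; omega⟩)
  obtain ⟨i, j, hne, heq⟩ := Finite.exists_ne_map_eq_of_infinite f
  have hstate : cfState p (i+1) = cfState p (j+1) := by
    apply state_eq
    · exact congrArg (fun x => (x.1 : Fin (Nat.sqrt p + 1)).val) heq
    · exact congrArg (fun x => (x.2 : Fin (2 * Nat.sqrt p + 1)).val) heq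
  rcases hne.lt_or_gt with hij | hij
  · refine ⟨j - i, by omega, ?_⟩
    have : cfState p (1 + i) = cfState p ((j - i + 1) + i) := by
      convert hstate using 2 <;> omega
    exact (back_iter hp h3 i (by omega) (by omega) this).symm
  · refine ⟨i - j, by omega, ?_⟩
    have : cfState p (1 + j) = cfState p ((i - j + 1) + j) := by
      convert hstate.symm using 2 <;> omega
    exact (back_iter hp h3 j (by omega) (by omega) this).symm

lemma cfPeriod_pos : 0 < cfPeriod p :=
  (Nat.sInf_mem (period_set_nonempty hp h3)).1

lemma cfPeriod_eq : cfState p (cfPeriod p + 1) = cfState p 1 :=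
  (Nat.sInf_mem (period_set_nonempty hp h3)).2

omit hp h3 in
lemma cfPeriod_min {k : ℕ} (hk : 0 < k) (h : cfState p (k+1) = cfState p 1) :
    cfPeriod p ≤ k := Nat.sInf_le ⟨hk, h⟩

lemma periodic : ∀ i, 1 ≤ i → cfState p (i + cfPeriod p) = cfState p i := by
  intro i
  induction i with
  | zero => omega
  | succ k ih =>
    intro _
    rcases Nat.eq_zero_or_pos k with rfl | hk
    · simpa [Nat.add_comm] using cfPeriod_eq hp h3
    · have h1 : cfState p (k + cfPeriod p) = cfState p k := ih hk
      have : k + 1 + cfPeriod p = (k + cfPeriod p) + 1 := by omega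
      rw [this, cfState_succ, h1, ← cfState_succ]

lemma state_one : cfState p 1 = (Nat.sqrt p, p - Nat.sqrt p ^ 2) :=
  state_eq (i := 1) (j := 1) rfl rfl ▸ (by
    have h1 : cfState p 1 = (mm p 1, dd p 1) := rfl
    rw [h1, mm_one, dd_one])

lemma mm_period_succ : mm p (cfPeriod p + 1) = Nat.sqrt p := by
  rw [mm, cfPeriod_eq hp h3, ← mm, mm_one]

lemma dd_period_succ : dd p (cfPeriod p + 1) = p - Nat.sqrt p ^ 2 := by
  rw [dd, cfPeriod_eq hp h3, ← dd, dd_one]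

lemma dd_period : dd p (cfPeriod p) = 1 := by
  have hch := (chain hp h3 (cfPeriod p)).1
  rw [mm_period_succ hp h3, dd_period_succ hp h3] at hch
  have hnsq := nsq_lt hp h3
  have hd1 : ((p - Nat.sqrt p ^ 2 : ℕ) : ℤ) = (p : ℤ) - (Nat.sqrt p : ℤ)^2 := by
    push_cast [Nat.cast_sub hnsq.le]
    ring
  rw [hd1] at hch
  have hpos : (0:ℤ) < (p : ℤ) - (Nat.sqrt p : ℤ)^2 := by
    have : (Nat.sqrt p ^ 2 : ℤ) < p := by exact_mod_cast hnsq
    push_cast at this ⊢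
    linarith
  have : (dd p (cfPeriod p) : ℤ) = 1 := by
    have h2 : (dd p (cfPeriod p) : ℤ) * ((p : ℤ) - (Nat.sqrt p : ℤ)^2) =
        1 * ((p : ℤ) - (Nat.sqrt p : ℤ)^2) := by linarith
    exact mul_right_cancel₀ (ne_of_gt hpos) h2
  exact_mod_cast this

lemma mm_period : mm p (cfPeriod p) = Nat.sqrt p := by
  have hL := cfPeriod_pos hp h3
  obtain ⟨hm1, hmn, hd1, hdlt, hsqlt⟩ := red hp h3 hL
  rw [dd_period hp h3] at hsqlt
  have hS1 := n_lt_sq hp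
  have : (Nat.sqrt p : ℝ) < (mm p (cfPeriod p) : ℝ) + 1 := by push_cast at hsqlt ⊢; linarith
  have : Nat.sqrt p < mm p (cfPeriod p) + 1 := by exact_mod_cast this
  omega

lemma period_even : Even (cfPeriod p) := by
  rcases Nat.even_or_odd (cfPeriod p) with h | h
  · exact h
  · exfalso
    have hL := cfPeriod_pos hp h3
    obtain ⟨k, hk⟩ : ∃ k, cfPeriod p = k + 1 := ⟨cfPeriod p - 1, by omega⟩
    have hnorm := norm' hp h3 k
    rw [← hk, dd_period hp h3] at hnorm
    have hodd : (-1 : ℤ)^(cfPeriod p) = -1 := Odd.neg_one_pow h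
    rw [hodd] at hnorm
    have hZ := congrArg (Int.cast : ℤ → ZMod 4) hnorm
    push_cast at hZ
    have hp4 : ((p : ℕ) : ZMod 4) = 3 := by
      have : p % 4 = 3 := h3
      conv_lhs => rw [← Nat.mod_add_div p 4]
      push_cast
      rw [this]
      rw [show (4 : ZMod 4) = 0 from rfl]
      simp
    rw [hp4] at hZ
    revert hZ
    generalize ((cfG p (cfPeriod p) : ℕ) : ZMod 4) = x
    generalize ((cfH p (cfPeriod p) : ℕ) : ZMod 4) = y
    revert x y
    decide

lemma revstep {i : ℕ} (hi : 1 ≤ i) :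
    stepPair p (mm p (i+1), dd p i) = (mm p i, dd p (i-1)) := by
  obtain ⟨k, rfl⟩ : ∃ k, i = k + 1 := ⟨i - 1, by omega⟩
  have hch := chain hp h3 (k+1)
  have hchk := chain hp h3 k
  have hd1 : 1 ≤ dd p (k+1) := dd_pos hp h3 (k+1)
  obtain ⟨hm1, hmn, hd1', hdlt, hsqlt⟩ := red hp h3 hi
  have hS1 := n_lt_sq hp
  have hS2 := sq_lt_n p
  have hd1R : (0:ℝ) < dd p (k+1) := by exact_mod_cast hd1
  -- the partial quotient computed by stepPair equals cfA p (k+1)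
  set aF := (Nat.sqrt p + mm p (k+2)) / dd p (k+1) with haF
  have haF_le : aF * dd p (k+1) ≤ Nat.sqrt p + mm p (k+2) := by
    rw [haF]; exact Nat.div_mul_le_self _ _
  have haF_gt : Nat.sqrt p + mm p (k+2) < aF * dd p (k+1) + dd p (k+1) := by
    conv_lhs => rw [← Nat.div_add_mod (Nat.sqrt p + mm p (k+2)) (dd p (k+1))]
    rw [haF, mul_comm]
    exact Nat.add_lt_add_left (Nat.mod_lt _ hd1) _
  obtain ⟨hlo, hhi⟩ := eta_bound hp h3 hi
  have haFR_le : (aF : ℝ) ≤ (sq p + mm p (k+2)) / dd p (k+1) := by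
    rw [le_div_iff₀ hd1R]
    have : (aF : ℝ) * dd p (k+1) ≤ (Nat.sqrt p : ℝ) + mm p (k+2) := by exact_mod_cast haF_le
    linarith
  have haFR_gt : (sq p + mm p (k+2)) / dd p (k+1) < aF + 1 := by
    rw [div_lt_iff₀ hd1R]
    have : (Nat.sqrt p : ℝ) + mm p (k+2) + 1 ≤ (aF : ℝ) * dd p (k+1) + dd p (k+1) := by
      exact_mod_cast haF_gt
    nlinarith
  have haeq : aF = cfA p (k+1) := by
    have e1 : (aF : ℝ) < cfA p (k+1) + 1 := lt_of_le_of_lt haFR_le hhi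
    have e2 : (cfA p (k+1) : ℝ) < aF + 1 := lt_of_le_of_lt hlo haFR_gt
    have e1' : aF < cfA p (k+1) + 1 := by exact_mod_cast e1
    have e2' : cfA p (k+1) < aF + 1 := by exact_mod_cast e2
    omega
  -- first component
  have hfst : aF * dd p (k+1) - mm p (k+2) = mm p (k+1) := by
    rw [haeq]
    have h2 := hch.2
    have h2' : mm p (k+1) + mm p (k+2) = cfA p (k+1) * dd p (k+1) := by exact_mod_cast h2
    omega
  -- second component
  have hnsq := nsq_lt hp h3
  have hm2 : mm p (k+1) ^ 2 < p := lt_of_le_of_lt (Nat.pow_le_pow_left hmn 2) hnsq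
  have hsnd : (p - mm p (k+1) ^ 2) / dd p (k+1) = dd p k := by
    have h1 := hchk.1
    have h1' : dd p k * dd p (k+1) = p - mm p (k+1) ^ 2 := by
      have : ((dd p k * dd p (k+1) : ℕ) : ℤ) = ((p - mm p (k+1)^2 : ℕ) : ℤ) := by
        rw [Nat.cast_sub hm2.le]
        push_cast
        push_cast at h1
        linarith
      exact_mod_cast this
    rw [← h1', Nat.mul_div_cancel _ (by omega : 0 < dd p (k+1))]
  show ((Nat.sqrt p + mm p (k+2)) / dd p (k+1) * dd p (k+1) - mm p (k+2),
    (p - ((Nat.sqrt p + mm p (k+2)) / dd p (k+1) * dd p (k+1) - mm p (k+2))^2) / dd p (k+1))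
    = (mm p (k+1), dd p (k+1-1))
  rw [← haF, hfst]
  simp [hsnd]

lemma rev_orbit : ∀ j, j ≤ cfPeriod p - 1 →
    cfState p (cfPeriod p + j) = (mm p (cfPeriod p + 1 - j), dd p (cfPeriod p - j)) := by
  have hL := cfPeriod_pos hp h3
  intro j
  induction j with
  | zero =>
    intro _
    have h1 : cfState p (cfPeriod p) = (mm p (cfPeriod p), dd p (cfPeriod p)) := rfl
    simp only [Nat.add_zero, Nat.sub_zero]
    rw [h1, mm_period hp h3, ← mm_period_succ hp h3]
  | succ t ih =>
    intro ht
    have ht' : t ≤ cfPeriod p - 1 := by omega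
    have hLt : 1 ≤ cfPeriod p - t := by omega
    have hstep : cfState p (cfPeriod p + t + 1) = stepPair p (cfState p (cfPeriod p + t)) :=
      cfState_succ p _
    have : cfPeriod p + (t+1) = cfPeriod p + t + 1 := by omega
    rw [this, hstep, ih ht']
    have hrev := revstep hp h3 (i := cfPeriod p - t - 1 + 1) (by omega)
    have e1 : cfPeriod p - t - 1 + 1 + 1 = cfPeriod p + 1 - t := by omega
    have e2 : cfPeriod p - t - 1 + 1 = cfPeriod p - t := by omega
    rw [e1, e2] at hrev
    rw [hrev]
    have i1 : cfPeriod p + 1 - (t+1) = cfPeriod p - t := by omega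
    have i2 : cfPeriod p - (t+1) = cfPeriod p - t - 1 := by omega
    rw [i1, i2]

lemma symm_md {j : ℕ} (h1 : 1 ≤ j) (h2 : j ≤ cfPeriod p - 1) :
    mm p j = mm p (cfPeriod p + 1 - j) ∧ dd p j = dd p (cfPeriod p - j) := by
  have hL := cfPeriod_pos hp h3
  have ha := rev_orbit hp h3 j h2
  have hb := periodic hp h3 j h1
  have : cfState p (cfPeriod p + j) = cfState p j := by
    rw [Nat.add_comm] at hb
    exact hb
  rw [this] at ha
  constructor
  · have h1 := congrArg Prod.fst ha
    simpa [mm] using h1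
  · have h1 := congrArg Prod.snd ha
    simpa [dd] using h1

end Period

section Mid

variable {p : ℕ} (hp : p.Prime) (h3 : p % 4 = 3)
include hp h3

lemma q_pos : 1 ≤ cfPeriod p / 2 := by
  obtain ⟨c, hc⟩ := period_even hp h3
  have := cfPeriod_pos hp h3
  omega

lemma two_q : 2 * (cfPeriod p / 2) = cfPeriod p := by
  obtain ⟨c, hc⟩ := period_even hp h3
  omega

lemma mm_mid : mm p (cfPeriod p / 2 + 1) = mm p (cfPeriod p / 2) := by
  have hq := q_pos hp h3
  have h2q := two_q hp h3
  have hsym := (symm_md hp h3 (j := cfPeriod p / 2) hq (by omega)).1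
  rw [hsym]
  congr 1
  omega

lemma two_n_lt : 2 * Nat.sqrt p < p := by
  have hnsq := nsq_lt hp h3
  have hn := n_pos hp h3
  rcases Nat.lt_or_ge (Nat.sqrt p) 2 with h | h
  · interval_cases (Nat.sqrt p) <;> omega
  · nlinarith

lemma dd_mid : dd p (cfPeriod p / 2) = 2 := by
  set q := cfPeriod p / 2 with hq_def
  have hq := q_pos hp h3
  have h2q := two_q hp h3
  have hL := cfPeriod_pos hp h3
  have hqL : q < cfPeriod p := by omega
  have hmmid := mm_mid hp h3
  have hch := chain hp h3 q
  have hmm2 : 2 * (mm p q : ℤ) = (cfA p q : ℤ) * dd p q := by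
    have := hch.2
    rw [hmmid] at this
    linarith
  have hchq1 := (chain hp h3 (q-1)).1
  have e1 : q - 1 + 1 = q := by omega
  rw [e1] at hchq1
  have dvd2m : (dd p q : ℤ) ∣ 2 * (mm p q : ℤ) := ⟨cfA p q, by linarith⟩
  have dvdpm : (dd p q : ℤ) ∣ (p : ℤ) - (mm p q : ℤ)^2 := ⟨dd p (q-1), by linarith⟩
  have dvd4p : (dd p q : ℤ) ∣ 4 * (p : ℤ) := by
    have h4 : (4 : ℤ) * p = (2 * mm p q) * (2 * mm p q) + 4 * ((p : ℤ) - (mm p q : ℤ)^2) := by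
      ring
    rw [h4]
    exact dvd_add (dvd2m.mul_right _) (dvdpm.mul_left 4)
  have dvd4pN : dd p q ∣ 4 * p := by exact_mod_cast dvd4p
  have hnotp : ¬ p ∣ dd p q := by
    intro hdvd
    have h1 := Nat.le_of_dvd (by exact_mod_cast dd_pos hp h3 q) hdvd
    have h2 := dd_le hp h3 q (by omega)
    have h3' := two_n_lt hp h3
    omega
  have hcop : Nat.Coprime p (dd p q) := (Nat.Prime.coprime_iff_not_dvd hp).2 hnotp
  have dvd4 : dd p q ∣ 4 := (Nat.Coprime.dvd_of_dvd_mul_right hcop.symm) dvd4pN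
  have hmem : dd p q ∈ Nat.divisors 4 := Nat.mem_divisors.2 ⟨dvd4, by norm_num⟩
  have hdivs : Nat.divisors 4 = {1, 2, 4} := by decide
  rw [hdivs] at hmem
  simp only [Finset.mem_insert, Finset.mem_singleton] at hmem
  rcases hmem with h1 | h2 | h4
  · -- d = 1 is impossible: it would give a shorter period
    exfalso
    have hmq : mm p q = Nat.sqrt p := by
      obtain ⟨hm1, hmn, hd1, hdlt, hsqlt⟩ := red hp h3 (by omega : 1 ≤ q)
      rw [h1] at hsqlt
      have hS1 := n_lt_sq hp
      have : (Nat.sqrt p : ℝ) < (mm p q : ℝ) + 1 := by push_cast at hsqlt ⊢; linarith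
      have : Nat.sqrt p < mm p q + 1 := by exact_mod_cast this
      omega
    have hstate : cfState p q = cfState p (cfPeriod p) := by
      apply state_eq
      · rw [hmq, mm_period hp h3]
      · rw [h1, dd_period hp h3]
    have hnext : cfState p (q + 1) = cfState p 1 := by
      rw [cfState_succ, hstate, ← cfState_succ]
      exact cfPeriod_eq hp h3
    have := cfPeriod_min (p := p) (by omega : 0 < q) hnext
    omega
  · exact h2
  · -- d = 4 is impossible mod 4
    exfalso
    rw [h4] at dvd2m dvdpm
    have hmeven : ∃ e : ℤ, (mm p q : ℤ) = 2 * e := by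
      obtain ⟨c, hc⟩ := dvd2m
      push_cast at hc
      exact ⟨c, by omega⟩
    obtain ⟨e, he⟩ := hmeven
    obtain ⟨c, hc⟩ := dvdpm
    push_cast at hc
    have hdvdp : (4 : ℤ) ∣ (p : ℤ) := ⟨c + e^2, by rw [he] at hc; nlinarith [hc]⟩
    have : (4 : ℕ) ∣ p := by exact_mod_cast hdvdp
    omega

lemma a_mid : cfA p (cfPeriod p / 2) = mm p (cfPeriod p / 2) := by
  have hch := (chain hp h3 (cfPeriod p / 2)).2
  rw [mm_mid hp h3, dd_mid hp h3] at hch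
  have : (cfA p (cfPeriod p / 2) : ℤ) = mm p (cfPeriod p / 2) := by push_cast at hch; omega
  exact_mod_cast this

lemma A_eq :
    (cfH p (cfPeriod p / 2 + 1) : ℤ) + cfH p (cfPeriod p / 2 - 1) =
      cfG p (cfPeriod p / 2) := by
  set q := cfPeriod p / 2 with hq_def
  have hq := q_pos hp h3
  have hR2 := Rtwo hp h3 (q - 1)
  have e1 : q - 1 + 1 = q := by omega
  rw [e1] at hR2
  have hHsucc : cfH p (q + 1) = cfA p q * cfH p q + cfH p (q - 1) := by
    have := cfH_succ (p := p) (q - 1)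
    have e2 : q - 1 + 2 = q + 1 := by omega
    rw [e2, e1] at this
    exact this
  rw [hHsucc, a_mid hp h3]
  rw [hR2, dd_mid hp h3]
  push_cast
  ring

lemma part1 :
    (cfG p (cfPeriod p / 2) : ℤ)^2 - p * (cfH p (cfPeriod p / 2) : ℤ)^2 =
      (-1)^(cfPeriod p / 2) * 2 := by
  have hq := q_pos hp h3
  have hnorm := norm' hp h3 (cfPeriod p / 2 - 1)
  have e1 : cfPeriod p / 2 - 1 + 1 = cfPeriod p / 2 := by omega
  rw [e1, dd_mid hp h3] at hnorm
  rw [hnorm]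
  norm_num

omit hp h3 in
lemma odd_sq_mod8 {A : ℤ} (hA : Odd A) : ∃ s : ℤ, A^2 = 8 * s + 1 := by
  obtain ⟨a, rfl⟩ := hA
  obtain ⟨c, hc⟩ := Int.even_mul_succ_self a
  exact ⟨c, by nlinarith⟩

lemma sign_eq :
    ((-1 : ℤ))^(cfPeriod p / 2) = (-1)^((p + 1) / 4) := by
  set q := cfPeriod p / 2 with hq_def
  set A := (cfG p q : ℤ) with hA_def
  set B := (cfH p q : ℤ) with hB_def
  have heq := part1 hp h3
  rw [← hq_def, ← hA_def, ← hB_def] at heq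
  clear_value A B
  have hpodd : p % 2 = 1 := by omega
  obtain ⟨c4, hc4⟩ : ∃ c : ℤ, (p : ℤ) = 4 * c + 3 := by
    refine ⟨(p / 4 : ℕ), ?_⟩
    have : p = 4 * (p / 4) + 3 := by omega
    exact_mod_cast this
  have hee : (-1:ℤ)^q = 1 ∨ (-1:ℤ)^q = -1 := by
    rcases Nat.even_or_odd q with h | h
    · exact Or.inl (Even.neg_one_pow h)
    · exact Or.inr (Odd.neg_one_pow h)
  -- A and B are odd
  have hodd : Odd A ∧ Odd B := by
    rcases Int.even_or_odd A with hA | hA <;> rcases Int.even_or_odd B with hB | hB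
    · exfalso
      obtain ⟨a, rfl⟩ := hA
      obtain ⟨b, rfl⟩ := hB
      have : (a + a)^2 - (p:ℤ) * (b + b)^2 = 4 * (a^2 - p * b^2) := by ring
      rw [this] at heq
      rcases hee with h | h <;> rw [h] at heq <;> omega
    · exfalso
      obtain ⟨a, rfl⟩ := hA
      obtain ⟨b, rfl⟩ := hB
      have : (a + a)^2 - (p:ℤ) * (2*b+1)^2 = 4 * (a^2 - p*(b^2 + b)) - p := by ring
      rw [this, hc4] at heq
      rcases hee with h | h <;> rw [h] at heq <;> omega
    · exfalso
      obtain ⟨a, rfl⟩ := hA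
      obtain ⟨b, rfl⟩ := hB
      have : (2*a+1)^2 - (p:ℤ) * (b + b)^2 = 4 * (a^2 + a - p * b^2) + 1 := by ring
      rw [this] at heq
      rcases hee with h | h <;> rw [h] at heq <;> omega
    · exact ⟨hA, hB⟩
  obtain ⟨s, hs⟩ := odd_sq_mod8 hodd.1
  obtain ⟨t, ht⟩ := odd_sq_mod8 hodd.2
  rw [hs, ht] at heq
  have hp8 : p % 8 = 3 ∨ p % 8 = 7 := by omega
  obtain ⟨c8, hc8⟩ : ∃ c : ℤ, (p : ℤ) = 8 * c + (p % 8 : ℕ) := by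
    refine ⟨(p / 8 : ℕ), ?_⟩
    have : p = 8 * (p / 8) + p % 8 := by omega
    exact_mod_cast this
  rcases Nat.even_or_odd q with hqpar | hqpar <;>
    rcases hp8 with h8 | h8
  · -- q even, p ≡ 3: impossible
    exfalso
    rw [Even.neg_one_pow hqpar] at heq
    rw [h8] at hc8
    push_cast at hc8
    have : 8 * s + 1 - (8 * c8 + 3) * (8 * t + 1) = 2 := by rw [← hc8]; linarith
    have h2 : 8 * s - 8 * (c8 * (8*t+1)) - 24 * t = 4 := by nlinarith
    obtain ⟨X, hX⟩ : ∃ X : ℤ, X = c8 * (8*t+1) := ⟨_, rfl⟩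
    rw [← hX] at h2
    omega
  · -- q even, p ≡ 7: signs match, both +1
    rw [Even.neg_one_pow hqpar]
    have : (p + 1) / 4 % 2 = 0 := by omega
    rw [Even.neg_one_pow (Nat.even_iff.2 this)]
  · -- q odd, p ≡ 3: signs match, both -1
    rw [Odd.neg_one_pow hqpar]
    have : (p + 1) / 4 % 2 = 1 := by omega
    rw [Odd.neg_one_pow (Nat.odd_iff.2 this)]
  · -- q odd, p ≡ 7: impossible
    exfalso
    rw [Odd.neg_one_pow hqpar] at heq
    rw [h8] at hc8
    push_cast at hc8
    have : 8 * s + 1 - (8 * c8 + 7) * (8 * t + 1) = -2 := by rw [← hc8]; linarith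
    have h2 : 8 * s - 8 * (c8 * (8*t+1)) - 56 * t = 4 := by nlinarith
    obtain ⟨X, hX⟩ : ∃ X : ℤ, X = c8 * (8*t+1) := ⟨_, rfl⟩
    rw [← hX] at h2
    omega

end Mid

section Legendre

variable {p : ℕ} (hp : p.Prime) (h3 : p % 4 = 3)

noncomputable def delta (p n : ℕ) : ℝ := (cfG p n : ℝ) - cfH p n * sq p
include hp h3

lemma H_pos' : ∀ n : ℕ, 1 ≤ cfH p (n+1) := by
  intro n
  induction n using Nat.strong_induction_on with
  | _ n ih =>
    match n with
    | 0 => exact le_refl 1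
    | Nat.succ k =>
      have h1 := ih k (by omega)
      have h2 := a_pos hp h3 (i := k+1) (by omega)
      have : 1 * 1 ≤ cfA p (k+1) * cfH p (k+1) := Nat.mul_le_mul h2 h1
      rw [cfH_succ]
      omega

lemma H_pos {n : ℕ} (hn : 1 ≤ n) : 1 ≤ cfH p n := by
  obtain ⟨k, rfl⟩ : ∃ k, n = k + 1 := ⟨n - 1, by omega⟩
  exact H_pos' hp h3 k

lemma H_le_succ {n : ℕ} (hn : 1 ≤ n) : cfH p n ≤ cfH p (n+1) := by
  obtain ⟨k, rfl⟩ : ∃ k, n = k + 1 := ⟨n - 1, by omega⟩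
  have h2 := a_pos hp h3 (i := k+1) (by omega)
  calc cfH p (k+1) = 1 * cfH p (k+1) := (one_mul _).symm
  _ ≤ cfA p (k+1) * cfH p (k+1) := Nat.mul_le_mul_right _ h2
  _ ≤ cfA p (k+1) * cfH p (k+1) + cfH p k := Nat.le_add_right _ _
  _ = cfH p (k+1+1) := (cfH_succ k).symm

lemma H_mono {m n : ℕ} (hm : 1 ≤ m) (hmn : m ≤ n) : cfH p m ≤ cfH p n := by
  induction n with
  | zero => omega
  | succ k ih =>
    rcases Nat.lt_or_ge m (k+1) with h | h
    · have h1 := ih (by omega)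
      have h2 : 1 ≤ k := by omega
      exact le_trans h1 (H_le_succ hp h3 h2)
    · have : m = k + 1 := by omega
      rw [this]

lemma H_strict {n : ℕ} (hn : 2 ≤ n) : cfH p n < cfH p (n+1) := by
  obtain ⟨k, rfl⟩ : ∃ k, n = k + 2 := ⟨n - 2, by omega⟩
  have h2 := a_pos hp h3 (i := k+2) (by omega)
  have h3' := H_pos' hp h3 k
  have hmul : 1 * cfH p (k+2) ≤ cfA p (k+2) * cfH p (k+2) := Nat.mul_le_mul_right _ h2
  have heq : cfH p (k+2+1) = cfA p (k+2) * cfH p (k+2) + cfH p (k+1) := cfH_succ (k+1)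
  rw [heq]
  have := H_pos' hp h3 k
  omega

lemma G_pos : ∀ n : ℕ, 1 ≤ cfG p n := by
  intro n
  induction n using Nat.strong_induction_on with
  | _ n ih =>
    match n with
    | 0 => exact le_refl 1
    | 1 => exact n_pos hp h3
    | Nat.succ (Nat.succ k) =>
      have h1 := ih k (by omega)
      rw [cfG_succ]
      omega

lemma G_le_succ (n : ℕ) : cfG p n ≤ cfG p (n+1) := by
  match n with
  | 0 => exact n_pos hp h3
  | Nat.succ k =>
    have h2 := a_pos hp h3 (i := k+1) (by omega)
    calc cfG p (k+1) = 1 * cfG p (k+1) := (one_mul _).symm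
    _ ≤ cfA p (k+1) * cfG p (k+1) := Nat.mul_le_mul_right _ h2
    _ ≤ cfA p (k+1) * cfG p (k+1) + cfG p k := Nat.le_add_right _ _
    _ = cfG p (k+1+1) := (cfG_succ k).symm

lemma G_mono {m n : ℕ} (hmn : m ≤ n) : cfG p m ≤ cfG p n := by
  induction n with
  | zero =>
    have : m = 0 := by omega
    rw [this]
  | succ k ih =>
    rcases Nat.lt_or_ge m (k+1) with h | h
    · exact le_trans (ih (by omega)) (G_le_succ hp h3 k)
    · have : m = k + 1 := by omega
      rw [this]

lemma G_two : 2 ≤ cfG p 2 := by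
  have h2 := a_pos hp h3 (i := 1) (by omega)
  have h4 := n_pos hp h3
  have hmul : 1 * cfG p 1 ≤ cfA p 1 * cfG p 1 := Nat.mul_le_mul_right _ h2
  have heq : cfG p 2 = cfA p 1 * cfG p 1 + cfG p 0 := cfG_succ 0
  have h1 : cfG p 1 = Nat.sqrt p := rfl
  rw [heq, cfG_zero]
  omega

lemma H_unbounded : ∀ k : ℕ, k + 1 ≤ cfH p (2*k+1) := by
  intro k
  induction k with
  | zero => exact le_refl 1
  | succ t ih =>
    have h1 : cfH p (2*t+1) ≤ cfH p (2*t+2) := H_le_succ hp h3 (by omega)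
    have h2 : cfH p (2*t+2) ≤ cfH p (2*t+3) := H_le_succ hp h3 (by omega)
    have h3' : cfH p (2*t+2) < cfH p (2*t+3) := H_strict hp h3 (by omega)
    have : 2*(t+1)+1 = 2*t+3 := by omega
    rw [this]
    omega

lemma exists_window {y : ℤ} (hy : 1 ≤ y) :
    ∃ n, 1 ≤ n ∧ (cfH p n : ℤ) ≤ y ∧ y < cfH p (n+1) := by
  set Y := y.toNat with hY
  have hYy : (Y : ℤ) = y := Int.toNat_of_nonneg (by omega)
  have hex : ∃ t, Y < cfH p t := by
    refine ⟨2*Y+1, ?_⟩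
    have := H_unbounded hp h3 Y
    omega
  set T := Nat.find hex with hT
  have hTspec : Y < cfH p T := Nat.find_spec hex
  have hT2 : 2 ≤ T := by
    by_contra hcon
    interval_cases T
    · rw [show cfH p 0 = 0 from rfl] at hTspec
      omega
    · rw [show cfH p 1 = 1 from rfl] at hTspec
      omega
  have hTmin : ¬ Y < cfH p (T-1) := Nat.find_min hex (by omega)
  refine ⟨T - 1, by omega, ?_, ?_⟩
  · have : cfH p (T-1) ≤ Y := by omega
    omega
  · have e : T - 1 + 1 = T := by omega
    rw [e]
    omega

lemma delta_denom_pos (n : ℕ) :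
    0 < (cfH p (n+1) : ℝ) * xi p (n+1) + cfH p n := by
  have h1 : (1:ℝ) ≤ (cfH p (n+1) : ℝ) := by exact_mod_cast H_pos' hp h3 n
  have h2 := xi_pos hp h3 (n+1)
  have h3' : (0:ℝ) ≤ (cfH p n : ℝ) := by positivity
  nlinarith

lemma delta_eq (n : ℕ) :
    delta p n = (-1)^n * xi p (n+1) / (cfH p (n+1) * xi p (n+1) + cfH p n) := by
  have hD := delta_denom_pos hp h3 n
  have hstar := star hp h3 n
  have hdetR : (cfG p (n+1) : ℝ) * cfH p n - (cfG p n : ℝ) * cfH p (n+1) = (-1)^(n+1) := by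
    have := congrArg (Int.cast : ℤ → ℝ) (det (p := p) n)
    push_cast at this
    exact this
  rw [delta, eq_div_iff (ne_of_gt hD)]
  linear_combination (-(cfH p n : ℝ)) * hstar - (xi p (n+1)) * hdetR

lemma delta_ne (n : ℕ) : delta p n ≠ 0 := by
  rw [delta_eq hp h3 n]
  have hD := delta_denom_pos hp h3 n
  have hx := xi_pos hp h3 (n+1)
  have h1 : ((-1:ℝ))^n ≠ 0 := by
    rcases Nat.even_or_odd n with h | h
    · rw [Even.neg_one_pow h]; norm_num
    · rw [Odd.neg_one_pow h]; norm_num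
  positivity

lemma delta_abs_pos (n : ℕ) : 0 < |delta p n| := abs_pos.2 (delta_ne hp h3 n)

lemma delta_succ (n : ℕ) : delta p (n+1) = -delta p n / xi p (n+1) := by
  have hx := xi_ne hp h3 (n+1)
  have hstar := star hp h3 n
  rw [eq_div_iff hx, delta, delta]
  linear_combination (-1 : ℝ) * hstar

lemma delta_mul_neg (n : ℕ) : delta p n * delta p (n+1) < 0 := by
  rw [delta_succ hp h3 n]
  have hx := xi_pos hp h3 (n+1)
  have hd := delta_ne hp h3 n
  have habs := abs_pos.2 hd
  have hsq : 0 < delta p n ^ 2 := by nlinarith [sq_abs (delta p n)]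
  have h2 : delta p n * (-delta p n / xi p (n+1)) = -(delta p n ^ 2 / xi p (n+1)) := by ring
  rw [h2]
  have := div_pos hsq hx
  linarith

omit hp h3 in
lemma abs_add_same_sign {u v : ℝ} (h : 0 < u * v) : |u + v| = |u| + |v| := by
  rcases mul_pos_iff.1 h with ⟨hu, hv⟩ | ⟨hu, hv⟩
  · rw [abs_of_pos hu, abs_of_pos hv, abs_of_pos (by linarith)]
  · rw [abs_of_neg hu, abs_of_neg hv, abs_of_neg (by linarith)]
    ring

lemma ba {n : ℕ} (hn : 1 ≤ n) {x y : ℤ} (hy : 0 < y) (hyH : y < cfH p (n+1))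
    (hne : ¬(x = cfG p n ∧ y = cfH p n)) :
    |delta p n| < |(x : ℝ) - y * sq p| := by
  have hdet := det (p := p) n
  set ε : ℤ := (-1)^(n+1) with hε_def
  have hε : ε * ε = 1 := by
    rw [hε_def, ← pow_add]
    exact Even.neg_one_pow ⟨n+1, rfl⟩
  set α := ε * (y * cfG p (n+1) - x * cfH p (n+1)) with hα
  set β := ε * (x * cfH p n - y * cfG p n) with hβ
  have hx_dec : x = α * cfG p n + β * cfG p (n+1) := by
    rw [hα, hβ]
    linear_combination (-(ε * x)) * hdet + (-x) * hε
  have hy_dec : y = α * cfH p n + β * cfH p (n+1) := by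
    rw [hα, hβ]
    linear_combination (-(ε * y)) * hdet + (-y) * hε
  have hreal : (x:ℝ) - y * sq p = α * delta p n + β * delta p (n+1) := by
    have hx' : ((x:ℤ):ℝ) = ((α * cfG p n + β * cfG p (n+1) : ℤ):ℝ) := by
      exact_mod_cast congrArg (Int.cast : ℤ → ℝ) hx_dec
    have hy' : ((y:ℤ):ℝ) = ((α * cfH p n + β * cfH p (n+1) : ℤ):ℝ) := by
      exact_mod_cast congrArg (Int.cast : ℤ → ℝ) hy_dec
    rw [delta, delta]
    push_cast at hx' hy' ⊢
    linear_combination hx' - sq p * hy'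
  have hHn1 : (1:ℤ) ≤ cfH p n := by exact_mod_cast H_pos hp h3 hn
  have hH11 : (1:ℤ) ≤ cfH p (n+1) := by exact_mod_cast H_pos hp h3 (by omega : 1 ≤ n+1)
  have hδn := delta_abs_pos hp h3 n
  have hδ1 := delta_abs_pos hp h3 (n+1)
  rcases eq_or_ne β 0 with hβ0 | hβ0
  · -- β = 0
    rw [hβ0, zero_mul, add_zero] at hy_dec hx_dec
    have hr : (x:ℝ) - y * sq p = α * delta p n := by
      rw [hreal, hβ0]
      push_cast
      ring
    have hα_pos : 1 ≤ α := by nlinarith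
    rcases eq_or_lt_of_le hα_pos with hα1 | hα2
    · exfalso
      apply hne
      constructor
      · rw [hx_dec, ← hα1, one_mul]
      · rw [hy_dec, ← hα1, one_mul]
    · have h2R : (2:ℝ) ≤ |(α:ℝ)| := by
        rw [abs_of_pos (by exact_mod_cast (by omega : (0:ℤ) < α))]
        exact_mod_cast (by omega : (2:ℤ) ≤ α)
      rw [hr, abs_mul]
      nlinarith
  · rcases eq_or_ne α 0 with hα0 | hα0
    · exfalso
      rw [hα0, zero_mul, zero_add] at hy_dec
      rcases lt_trichotomy β 0 with h | h | h
      · nlinarith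
      · exact hβ0 h
      · have h1 : (1:ℤ) ≤ β := h
        nlinarith
    · have hαβ : α * β < 0 := by
        rcases lt_trichotomy β 0 with hb | hb | hb
        · have hbb : β ≤ -1 := by omega
          have : 0 < α := by nlinarith
          nlinarith
        · exact absurd hb hβ0
        · have hbb : (1:ℤ) ≤ β := hb
          have : α < 0 := by nlinarith
          nlinarith
      have hδδ := delta_mul_neg hp h3 n
      have hαβR : ((α:ℝ)) * β < 0 := by exact_mod_cast hαβ
      have hsame : 0 < ((α:ℝ) * delta p n) * ((β:ℝ) * delta p (n+1)) := by
        have : ((α:ℝ) * β) * (delta p n * delta p (n+1)) > 0 :=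
          mul_pos_of_neg_of_neg hαβR hδδ
        nlinarith
      rw [hreal, abs_add_same_sign hsame, abs_mul, abs_mul]
      have h1 : (1:ℝ) ≤ |(α:ℝ)| := by exact_mod_cast Int.one_le_abs hα0
      have h2 : (1:ℝ) ≤ |(β:ℝ)| := by exact_mod_cast Int.one_le_abs hβ0
      nlinarith

lemma G_sq_ne (n : ℕ) : (cfG p n : ℤ)^2 ≠ p * (cfH p n : ℤ)^2 := by
  match n with
  | 0 =>
    rw [cfG_zero, cfH_zero]
    push_cast
    norm_num
  | Nat.succ k =>
    intro heq
    have hpZ : Prime (p : ℤ) := Int.prime_iff_natAbs_prime.2 (by simpa using hp)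
    have hdet := det (p := p) k
    set ε : ℤ := (-1)^(k+1) with hε_def
    have hε : ε * ε = 1 := by
      rw [hε_def, ← pow_add]
      exact Even.neg_one_pow ⟨k+1, rfl⟩
    have hcop : IsCoprime (cfG p (k+1) : ℤ) (cfH p (k+1) : ℤ) := by
      refine ⟨ε * cfH p k, -(ε * cfG p k), ?_⟩
      linear_combination ε * hdet + hε
    have hdvdG2 : (p:ℤ) ∣ (cfG p (k+1) : ℤ)^2 := ⟨(cfH p (k+1) : ℤ)^2, heq⟩
    have hdvdG : (p:ℤ) ∣ (cfG p (k+1) : ℤ) := hpZ.dvd_of_dvd_pow hdvdG2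
    obtain ⟨g, hg⟩ := hdvdG
    have hpne : (p:ℤ) ≠ 0 := by
      have := hp.two_le
      exact_mod_cast (by omega : p ≠ 0)
    have hH2 : (cfH p (k+1) : ℤ)^2 = p * g^2 := by
      have h1 : (p:ℤ) * ((cfH p (k+1) : ℤ)^2) = (p:ℤ) * ((p:ℤ) * g^2) := by
        rw [← heq, hg]
        ring
      exact mul_left_cancel₀ hpne h1
    have hdvdH : (p:ℤ) ∣ (cfH p (k+1) : ℤ) := hpZ.dvd_of_dvd_pow ⟨g^2, hH2⟩
    have hunit := IsCoprime.isUnit_of_dvd' hcop ⟨g, hg⟩ hdvdH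
    rw [Int.isUnit_iff] at hunit
    have := hp.two_le
    rcases hunit with h | h <;> omega

lemma pell_best {x y : ℤ} (hx : 0 < x) (hy : 0 < y) (hsol : x^2 - p * y^2 = 1) :
    ∃ n, 1 ≤ n ∧ x = cfG p n ∧ y = cfH p n := by
  obtain ⟨n, hn1, hnl, hnu⟩ := exists_window hp h3 (by omega : 1 ≤ y)
  by_cases hc : x = cfG p n ∧ y = cfH p n
  · exact ⟨n, hn1, hc.1, hc.2⟩
  exfalso
  have hba := ba hp h3 hn1 hy hnu hc
  have hSsq := sq_sq p
  have hSpos := sq_pos hp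
  set S := sq p
  have hxR : (1:ℝ) ≤ (x:ℝ) := by exact_mod_cast hx
  have hyR : (1:ℝ) ≤ (y:ℝ) := by exact_mod_cast hy
  have hsolR : ((x:ℝ))^2 - p * (y:ℝ)^2 = 1 := by exact_mod_cast congrArg (Int.cast : ℤ → ℝ) hsol
  have hfac : ((x:ℝ) - y*S) * ((x:ℝ) + y*S) = 1 := by
    have h0 : ((x:ℝ) - y*S)*((x:ℝ)+y*S) = (x:ℝ)^2 - (y:ℝ)^2*S^2 := by ring
    rw [h0, hSsq]
    linarith [hsolR]
  have hsum_pos : (0:ℝ) < (x:ℝ) + y*S := by nlinarith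
  have hdiff_pos : (0:ℝ) < (x:ℝ) - y*S := by nlinarith
  have habs : |(x:ℝ) - y*S| = (x:ℝ) - y*S := abs_of_pos hdiff_pos
  rw [habs] at hba
  set Gn := (cfG p n : ℝ) with hGn_def
  set Hn := (cfH p n : ℝ) with hHn_def
  have hδdef : delta p n = Gn - Hn * S := rfl
  have hHn1 : (1:ℝ) ≤ Hn := by
    rw [hHn_def]
    exact_mod_cast H_pos hp h3 hn1
  have hGn1 : (1:ℝ) ≤ Gn := by
    rw [hGn_def]
    exact_mod_cast G_pos hp h3 n
  have hHny : Hn ≤ (y:ℝ) := by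
    rw [hHn_def]
    exact_mod_cast hnl
  have hGn : Gn ≤ |delta p n| + Hn * S := by
    have h0 : Gn - Hn*S ≤ |delta p n| := by
      rw [hδdef]
      exact le_abs_self _
    linarith
  have hpos2 : (0:ℝ) < Gn + Hn * S := by nlinarith
  have hnormR : |Gn^2 - p*Hn^2| = |delta p n| * (Gn + Hn*S) := by
    have h1 : Gn^2 - (p:ℝ)*Hn^2 = (Gn - Hn*S)*(Gn + Hn*S) := by
      linear_combination (Hn^2) * hSsq
    rw [h1, ← hδdef, abs_mul, abs_of_pos hpos2]
  have hδab := abs_nonneg (delta p n)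
  have hchain : |delta p n| * (Gn + Hn*S) < 1 := by
    have e1 : |delta p n| * (Gn + Hn*S) ≤ |delta p n| * (|delta p n| + 2*(Hn * S)) := by
      apply mul_le_mul_of_nonneg_left _ hδab
      linarith
    have e2 : |delta p n| * (|delta p n| + 2*(Hn*S)) < ((x:ℝ)-y*S)*(((x:ℝ)-y*S) + 2*((y:ℝ)*S)) := by
      nlinarith [hba, hδab, hHny, hSpos, mul_le_mul_of_nonneg_right hHny hSpos.le]
    have e3 : ((x:ℝ)-y*S)*(((x:ℝ)-y*S)+2*((y:ℝ)*S)) = 1 := by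
      rw [← hfac]
      ring
    linarith
  have habslt : |((cfG p n:ℤ)^2 - p*(cfH p n:ℤ)^2 : ℤ)| < 1 := by
    have h0 : |((((cfG p n:ℤ)^2 - p*(cfH p n:ℤ)^2 : ℤ)) : ℝ)| < 1 := by
      have hcst : ((((cfG p n:ℤ)^2 - p*(cfH p n:ℤ)^2 : ℤ)) : ℝ) = Gn^2 - p*Hn^2 := by
        push_cast
        rw [hGn_def, hHn_def]
      rw [hcst, hnormR]
      exact hchain
    exact_mod_cast h0
  have hzero : (cfG p n:ℤ)^2 - p*(cfH p n:ℤ)^2 = 0 := by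
    rcases abs_lt.1 habslt with ⟨h1', h2'⟩
    omega
  exact G_sq_ne hp h3 n (by linarith)

lemma sol_index_ge {n : ℕ} (hn : 1 ≤ n)
    (h : (cfG p n : ℤ)^2 - p * (cfH p n : ℤ)^2 = 1) : cfPeriod p ≤ n := by
  obtain ⟨k, rfl⟩ : ∃ k, n = k + 1 := ⟨n - 1, by omega⟩
  have hnorm := norm' hp h3 k
  rw [h] at hnorm
  have hd := dd_pos hp h3 (k+1)
  have hd1 : dd p (k+1) = 1 := by
    rcases Nat.even_or_odd (k+1) with hpar | hpar
    · rw [Even.neg_one_pow hpar, one_mul] at hnorm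
      exact_mod_cast hnorm.symm
    · exfalso
      rw [Odd.neg_one_pow hpar] at hnorm
      have : (1:ℤ) ≤ (dd p (k+1) : ℤ) := by exact_mod_cast hd
      omega
  have hm : mm p (k+1) = Nat.sqrt p := by
    obtain ⟨hm1, hmn, hd1', hdlt, hsqlt⟩ := red hp h3 (by omega : 1 ≤ k+1)
    rw [hd1] at hsqlt
    have hS1 := n_lt_sq hp
    have h0 : (Nat.sqrt p : ℝ) < (mm p (k+1) : ℝ) + 1 := by push_cast at hsqlt ⊢; linarith
    have h1 : Nat.sqrt p < mm p (k+1) + 1 := by exact_mod_cast h0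
    omega
  have hstate : cfState p (k+1) = cfState p (cfPeriod p) := by
    apply state_eq
    · rw [hm, mm_period hp h3]
    · rw [hd1, dd_period hp h3]
  have hnext : cfState p (k+2) = cfState p 1 := by
    rw [show k+2 = (k+1)+1 from rfl, cfState_succ, hstate, ← cfState_succ]
    exact cfPeriod_eq hp h3
  exact cfPeriod_min (p := p) (by omega : 0 < k+1) hnext

lemma GH_period_sol :
    (cfG p (cfPeriod p) : ℤ)^2 - p * (cfH p (cfPeriod p) : ℤ)^2 = 1 := by
  have hL := cfPeriod_pos hp h3
  have hnorm := norm' hp h3 (cfPeriod p - 1)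
  have e : cfPeriod p - 1 + 1 = cfPeriod p := by omega
  rw [e, dd_period hp h3, Even.neg_one_pow (period_even hp h3)] at hnorm
  rw [hnorm]
  norm_num

lemma fund_eq (u : Pell.Solution₁ (p : ℤ)) (hu : Pell.IsFundamental u) :
    u.x = cfG p (cfPeriod p) ∧ u.y = cfH p (cfPeriod p) := by
  have hL := cfPeriod_pos hp h3
  have hLeven := period_even hp h3
  have hL2 : 2 ≤ cfPeriod p := by
    obtain ⟨c, hc⟩ := hLeven
    omega
  have hux := hu.1
  have huy := hu.2.1
  have hprop := u.prop
  obtain ⟨n, hn1, hxeq, hyeq⟩ := pell_best hp h3 (by linarith) huy hprop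
  have hLn : cfPeriod p ≤ n := by
    apply sol_index_ge hp h3 hn1
    rw [← hxeq, ← hyeq]
    exact hprop
  set sl := Pell.Solution₁.mk (cfG p (cfPeriod p)) (cfH p (cfPeriod p))
    (GH_period_sol hp h3) with hsl
  have hslx : 1 < sl.x := by
    rw [hsl, Pell.Solution₁.x_mk]
    have h1 := G_two hp h3
    have h2 := G_mono hp h3 hL2
    exact_mod_cast (by omega : 1 < cfG p (cfPeriod p))
  have hsly : 0 < sl.y := by
    rw [hsl, Pell.Solution₁.y_mk]
    exact_mod_cast H_pos hp h3 (by omega : 1 ≤ cfPeriod p)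
  have hyle : u.y ≤ (cfH p (cfPeriod p) : ℤ) := by
    have := hu.y_le_y hslx hsly
    rwa [hsl, Pell.Solution₁.y_mk] at this
  have hyge : (cfH p (cfPeriod p) : ℤ) ≤ u.y := by
    rw [hyeq]
    exact_mod_cast H_mono hp h3 (by omega : 1 ≤ cfPeriod p) hLn
  have hyeq' : u.y = (cfH p (cfPeriod p) : ℤ) := le_antisymm hyle hyge
  have hnL : n = cfPeriod p := by
    by_contra hcon
    have hlt : cfPeriod p < n := by omega
    have h1 : cfH p (cfPeriod p) < cfH p (cfPeriod p + 1) := H_strict hp h3 hL2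
    have h2 : cfH p (cfPeriod p + 1) ≤ cfH p n := H_mono hp h3 (by omega) (by omega)
    have h3' : (cfH p (cfPeriod p) : ℤ) < cfH p n := by exact_mod_cast lt_of_lt_of_le h1 h2
    rw [← hyeq] at h3'
    omega
  constructor
  · rw [hxeq, hnL]
  · exact hyeq'

end Legendre

end CF7

set_option maxHeartbeats 2000000 in
theorem stmt7 (p : ℕ) (hp : p.Prime) (h3 : p % 4 = 3)
    (u : Pell.Solution₁ (p : ℤ)) (hu : Pell.IsFundamental u) :
    ((cfH p (cfPeriod p / 2 + 1) + cfH p (cfPeriod p / 2 - 1) : ℤ) ^ 2 -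
        p * (cfH p (cfPeriod p / 2) : ℤ) ^ 2 = (-1) ^ ((p + 1) / 4) * 2) ∧
    u.y = (cfH p (cfPeriod p / 2) : ℤ) *
        (cfH p (cfPeriod p / 2 + 1) + cfH p (cfPeriod p / 2 - 1)) := by
  have hA := CF7.A_eq hp h3
  have hpart1 := CF7.part1 hp h3
  have hsign := CF7.sign_eq hp h3
  constructor
  · rw [hA, hpart1, hsign]
  · -- the fundamental solution
    obtain ⟨hux, huy⟩ := CF7.fund_eq hp h3 u hu
    set q := cfPeriod p / 2 with hq_def
    set A : ℤ := (CF7.cfG p q : ℤ) with hA_def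
    set B : ℤ := (cfH p q : ℤ) with hB_def
    have heq : A^2 - (p:ℤ)*B^2 = (-1)^q * 2 := hpart1
    have hεsq : ((-1:ℤ)^q)^2 = 1 := by
      rw [← pow_mul, mul_comm, pow_mul]
      norm_num
    set X : ℤ := (p:ℤ)*B^2 + (-1)^q with hX_def
    have hX2 : 2*X = A^2 + (p:ℤ)*B^2 := by
      rw [hX_def]
      linear_combination (-1 : ℤ) * heq
    have h4 : (A^2 - (p:ℤ)*B^2)^2 = 4 := by
      rw [heq, mul_pow, hεsq]
      norm_num
    have h44 : 4*X^2 - 4*(p:ℤ)*(A*B)^2 - 4 = 0 := by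
      linear_combination (2*X + A^2 + (p:ℤ)*B^2) * hX2 + h4
    have hsol : X^2 - (p:ℤ)*(A*B)^2 = 1 := by linarith
    have hApos : (1:ℤ) ≤ A := by
      rw [hA_def]
      exact_mod_cast CF7.G_pos hp h3 q
    have hBpos : (1:ℤ) ≤ B := by
      rw [hB_def]
      exact_mod_cast CF7.H_pos hp h3 (CF7.q_pos hp h3)
    have hp3 : (3:ℤ) ≤ (p:ℤ) := by exact_mod_cast (by omega : 3 ≤ p)
    have hεge : (-1:ℤ) ≤ (-1:ℤ)^q := by
      rcases Nat.even_or_odd q with h | h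
      · rw [Even.neg_one_pow h]; norm_num
      · rw [Odd.neg_one_pow h]
    have hXpos : 0 < X := by
      rw [hX_def]
      nlinarith
    set sol := Pell.Solution₁.mk X (A*B) hsol with hsol_def
    have hsolx : sol.x = X := Pell.Solution₁.x_mk _ _ _
    have hsoly : sol.y = A*B := Pell.Solution₁.y_mk _ _ _
    obtain ⟨k, hk⟩ := hu.eq_pow_of_nonneg (by rw [hsolx]; exact hXpos)
      (by rw [hsoly]; positivity)
    have hABpos : (0:ℤ) < A*B := by positivity
    have hk0 : k ≠ 0 := by
      intro h0
      rw [h0, pow_zero] at hk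
      have : sol.y = 0 := by rw [hk]; rfl
      rw [hsoly] at this
      omega
    have huxpos : 0 < u.x := hu.x_pos
    have huypos : 0 < u.y := hu.2.1
    have hk1 : k = 1 := by
      by_contra hcon
      have hk2 : 2 ≤ k := by omega
      -- monotonicity of y along powers
      have hmono : ∀ j, 2 ≤ j → (u^2).y ≤ (u^j).y := by
        intro j hj
        induction j, hj using Nat.le_induction with
        | base => exact le_refl _
        | succ t ht ih =>
          have hxp : 0 < (u^t).x := Pell.Solution₁.x_pow_pos huxpos t
          have hyp : 0 < (u^t).y := by
            obtain ⟨t', rfl⟩ : ∃ t', t = t' + 1 := ⟨t - 1, by omega⟩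
            exact Pell.Solution₁.y_pow_succ_pos huxpos huypos t'
          have hstep : (u^(t+1)).y = (u^t).x * u.y + (u^t).y * u.x := by
            rw [pow_succ]
            exact Pell.Solution₁.y_mul _ _
          rw [hstep]
          nlinarith
      have hy2 : (u^2).y = 2*(u.x*u.y) := by
        rw [pow_two, Pell.Solution₁.y_mul]
        ring
      have hABle : A*B ≤ u.x * u.y := by
        rw [hux, huy]
        have h1 : A ≤ (CF7.cfG p (cfPeriod p) : ℤ) := by
          rw [hA_def]
          exact_mod_cast CF7.G_mono hp h3 (by omega : q ≤ cfPeriod p)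
        have h2 : B ≤ (cfH p (cfPeriod p) : ℤ) := by
          rw [hB_def]
          exact_mod_cast CF7.H_mono hp h3 (CF7.q_pos hp h3) (by omega : q ≤ cfPeriod p)
        have h3' : (0:ℤ) ≤ (cfH p (cfPeriod p) : ℤ) := by positivity
        nlinarith
      have hcontr : sol.y = (u^k).y := by rw [hk]
      have h5 := hmono k hk2
      rw [hy2] at h5
      rw [hsoly] at hcontr
      nlinarith [mul_pos huxpos huypos]
    rw [hk1, pow_one] at hk
    have : u.y = A * B := by rw [← hk, hsoly]
    rw [this, hA]
    ring
end

section
/- Let p be a prime with p ≡ 3 (mod 4), n = ⌊√p⌋, and let a_{l/2} be the central partial quotient of the regular continued fraction of √p (l the period length, which is even). Then a_{l/2} = n or a_{l/2} = n − 1; in particular √p − 2 < a_{l/2} ≤ n. -/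
set_option linter.unusedSectionVars false

namespace CFAux

def step (p : ℕ) (s : ℕ × ℕ) : ℕ × ℕ :=
  ((Nat.sqrt p + s.1) / s.2 * s.2 - s.1,
   (p - ((Nat.sqrt p + s.1) / s.2 * s.2 - s.1) ^ 2) / s.2)

lemma cfState_succ (p i : ℕ) : cfState p (i + 1) = step p (cfState p i) := rfl

def Valid (p : ℕ) (s : ℕ × ℕ) : Prop :=
  0 < s.1 ∧ s.1 ≤ Nat.sqrt p ∧ 0 < s.2 ∧ Nat.sqrt p < s.1 + s.2 ∧
    s.2 ≤ Nat.sqrt p + s.1 ∧ s.2 ∣ p - s.1 ^ 2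

variable {p : ℕ}

lemma sqrt_sq_lt (hp : p.Prime) : Nat.sqrt p ^ 2 < p := by
  rcases lt_or_eq_of_le (Nat.sqrt_le' p) with h | h
  · exact h
  · exfalso
    have h2 : Nat.sqrt p ∣ p := ⟨Nat.sqrt p, by rw [← pow_two]; exact h.symm⟩
    rcases hp.eq_one_or_self_of_dvd _ h2 with h3 | h3
    · rw [h3] at h; simp at h; exact hp.one_lt.ne' h.symm
    · rw [h3] at h
      have h4 := hp.two_le
      nlinarith

lemma lt_sqrt_succ_sq : p < (Nat.sqrt p + 1) ^ 2 := by
  simpa [Nat.succ_eq_add_one] using Nat.lt_succ_sqrt' p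

lemma sqrt_pos' (h3 : p % 4 = 3) : 1 ≤ Nat.sqrt p :=
  Nat.sqrt_pos.mpr (by omega)

lemma two_sqrt_lt (hp : p.Prime) (h3 : p % 4 = 3) : 2 * Nat.sqrt p < p := by
  have h1 := sqrt_sq_lt hp
  have hb : Nat.sqrt p ^ 2 = Nat.sqrt p * Nat.sqrt p := sq (Nat.sqrt p)
  rcases Nat.lt_or_ge (Nat.sqrt p) 2 with h | h
  · omega
  · have h2 : 2 * Nat.sqrt p ≤ Nat.sqrt p * Nat.sqrt p := Nat.mul_le_mul_right _ h
    omega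

set_option maxHeartbeats 1000000 in
lemma step_spec (hp : p.Prime) {s : ℕ × ℕ} (hs : Valid p s) :
    Valid p (step p s) ∧ (step p s).1 + s.1 = (Nat.sqrt p + s.1) / s.2 * s.2 ∧
      s.2 * (step p s).2 = p - (step p s).1 ^ 2 ∧ Nat.sqrt p < (step p s).1 + s.2 := by
  obtain ⟨hm0, hmn, hd0, hnd, hdn, hdvd⟩ := hs
  have hstep1 : (step p s).1 = (Nat.sqrt p + s.1) / s.2 * s.2 - s.1 := rfl
  have hstep2 : (step p s).2 = (p - ((Nat.sqrt p + s.1) / s.2 * s.2 - s.1) ^ 2) / s.2 := rfl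
  set n := Nat.sqrt p with hn
  set m := s.1 with hmdef
  set d := s.2 with hddef
  set a := (n + m) / d with ha
  have hdm : d * a + (n + m) % d = n + m := Nat.div_add_mod (n + m) d
  have hmod : (n + m) % d < d := Nat.mod_lt _ hd0
  have hcomm : d * a = a * d := Nat.mul_comm d a
  have ha1 : 1 ≤ a := (Nat.one_le_div_iff hd0).mpr (by omega)
  have hda : d ≤ a * d := Nat.le_mul_of_pos_left d ha1
  have hm_lt : m < a * d := by
    rcases Nat.lt_or_ge n d with h | h
    · omega
    · omega
  set m' := a * d - m with hm'
  have hsum : m' + m = a * d := by omega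
  have hm'n : m' ≤ n := by omega
  have hm'0 : 0 < m' := by omega
  have hnm'd : n < m' + d := by omega
  have hdm' : d ≤ n + m' := by omega
  have hmsq : m ^ 2 ≤ p := le_of_lt (lt_of_le_of_lt (Nat.pow_le_pow_left hmn 2) (sqrt_sq_lt hp))
  have hm'sq : m' ^ 2 < p := lt_of_le_of_lt (Nat.pow_le_pow_left hm'n 2) (sqrt_sq_lt hp)
  have hdvdZ : (d : ℤ) ∣ (p : ℤ) - (m' : ℤ) ^ 2 := by
    have h1 : (d : ℤ) ∣ (p : ℤ) - (m : ℤ) ^ 2 := by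
      have h0 := Int.natCast_dvd_natCast.mpr hdvd
      rwa [Nat.cast_sub hmsq, Nat.cast_pow] at h0
    have h2 : (p : ℤ) - (m' : ℤ) ^ 2 =
        ((p : ℤ) - (m : ℤ) ^ 2) - ((m' : ℤ) - m) * (m' + m) := by ring
    rw [h2]
    refine dvd_sub h1 (Dvd.dvd.mul_left ?_ _)
    have h4 : ((m' : ℤ) + m) = (a : ℤ) * d := by exact_mod_cast congrArg (Nat.cast : ℕ → ℤ) hsum
    exact h4 ▸ Dvd.intro_left _ rfl
  have hdvd' : d ∣ p - m' ^ 2 := by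
    have h5 : ((d : ℕ) : ℤ) ∣ ((p - m' ^ 2 : ℕ) : ℤ) := by
      rwa [Nat.cast_sub hm'sq.le, Nat.cast_pow]
    exact_mod_cast h5
  have hstep2' : (step p s).2 = (p - m' ^ 2) / d := hstep2
  set d' := (p - m' ^ 2) / d with hd'
  have hdd' : d * d' = p - m' ^ 2 := Nat.mul_div_cancel' hdvd'
  have hd'0 : 0 < d' := by
    rcases Nat.eq_zero_or_pos d' with h | h
    · rw [h, mul_zero] at hdd'; omega
    · exact h
  have hd'dvd : d' ∣ p - m' ^ 2 := Dvd.intro_left _ hdd'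
  have hP : d * d' + m' ^ 2 = p := by omega
  have hPz : (d : ℤ) * d' + (m' : ℤ) ^ 2 = p := by exact_mod_cast hP
  have hnsq : (Nat.sqrt p) ^ 2 < p := sqrt_sq_lt hp
  have hnsq2 : p < (Nat.sqrt p + 1) ^ 2 := lt_sqrt_succ_sq
  have hnm'd' : n < m' + d' := by
    by_contra hcon
    push_neg at hcon
    have hc : (m' : ℤ) + d' ≤ n := by exact_mod_cast hcon
    have hd2 : (d : ℤ) ≤ n + m' := by exact_mod_cast hdm'
    have hz1 : (0:ℤ) ≤ ((n : ℤ) - m' - d') * ((n : ℤ) + m') := by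
      apply mul_nonneg <;> [linarith; positivity]
    have hz2 : (0:ℤ) ≤ ((n : ℤ) + m' - d) * d' := by
      apply mul_nonneg <;> [linarith; positivity]
    have hn2 : ((n:ℤ))^2 < p := by exact_mod_cast hnsq
    nlinarith [hPz, hz1, hz2, hn2]
  have hd'le : d' ≤ n + m' := by
    by_contra hcon
    push_neg at hcon
    have hc : (n : ℤ) + m' + 1 ≤ d' := by exact_mod_cast hcon
    have hd2 : (n : ℤ) + 1 ≤ m' + d := by exact_mod_cast hnm'd
    have hz1 : (0:ℤ) ≤ ((d : ℤ) + m' - n - 1) * d' := by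
      apply mul_nonneg <;> [linarith; positivity]
    have hz2 : (0:ℤ) ≤ ((n : ℤ) + 1 - m') * ((d' : ℤ) - n - m' - 1) := by
      apply mul_nonneg
      · have : (m' : ℤ) ≤ n := by exact_mod_cast hm'n
        linarith
      · linarith
    have hn2 : (p:ℤ) < ((n:ℤ) + 1)^2 := by exact_mod_cast hnsq2
    nlinarith [hPz, hz1, hz2, hn2]
  refine ⟨⟨?_, ?_, ?_, ?_, ?_, ?_⟩, ?_, ?_, ?_⟩
  · rw [hstep1]; exact hm'0
  · rw [hstep1]; exact hm'n
  · rw [hstep2']; exact hd'0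
  · show n < (step p s).1 + (step p s).2
    rw [hstep1, hstep2']; exact hnm'd'
  · show (step p s).2 ≤ n + (step p s).1
    rw [hstep1, hstep2']; exact hd'le
  · show (step p s).2 ∣ p - (step p s).1 ^ 2
    rw [hstep1, hstep2']; exact hd'dvd
  · rw [hstep1]; omega
  · rw [hstep1, hstep2']; exact hdd'
  · rw [hstep1]; omega

lemma cfState_one : cfState p 1 = (Nat.sqrt p, p - Nat.sqrt p ^ 2) := by
  simp [cfState]

lemma valid_one (hp : p.Prime) (h3 : p % 4 = 3) : Valid p (cfState p 1) := by
  rw [cfState_one]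
  have h1 := sqrt_sq_lt hp
  have h2 := lt_sqrt_succ_sq (p := p)
  have h4 := sqrt_pos' h3
  have hb : (Nat.sqrt p + 1) ^ 2 = Nat.sqrt p ^ 2 + 2 * Nat.sqrt p + 1 := by ring
  refine ⟨h4, le_refl _, by omega, by omega, by omega, dvd_refl _⟩

lemma valid_cfState (hp : p.Prime) (h3 : p % 4 = 3) :
    ∀ i, 1 ≤ i → Valid p (cfState p i) := by
  intro i hi
  induction i with
  | zero => omega
  | succ j ih =>
    rcases Nat.eq_zero_or_pos j with h | h
    · subst h; exact valid_one hp h3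
    · rw [cfState_succ]; exact (step_spec hp (ih h)).1

/-- the chain identity `dᵢ dᵢ₊₁ = p - mᵢ₊₁²`, valid for all i. -/
lemma chain (hp : p.Prime) (h3 : p % 4 = 3) (i : ℕ) :
    (cfState p i).2 * (cfState p (i + 1)).2 = p - (cfState p (i + 1)).1 ^ 2 := by
  rcases Nat.eq_zero_or_pos i with h | h
  · subst h
    rw [cfState_one]
    show 1 * (p - Nat.sqrt p ^ 2) = _
    rw [one_mul]
  · rw [cfState_succ]
    exact (step_spec hp (valid_cfState hp h3 i h)).2.2.1

/-- sum identity: `mᵢ₊₁ + mᵢ = aᵢ dᵢ`, and `n < mᵢ₊₁ + dᵢ`, for i ≥ 1. -/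
lemma sum_id (hp : p.Prime) (h3 : p % 4 = 3) {i : ℕ} (hi : 1 ≤ i) :
    (cfState p (i + 1)).1 + (cfState p i).1 =
      (Nat.sqrt p + (cfState p i).1) / (cfState p i).2 * (cfState p i).2 ∧
    Nat.sqrt p < (cfState p (i + 1)).1 + (cfState p i).2 := by
  have h := step_spec hp (valid_cfState hp h3 i hi)
  rw [cfState_succ]
  exact ⟨h.2.1, h.2.2.2⟩

/-- uniqueness of m in the window `(n - d, n]` with fixed residue -/
lemma uniq {d x y c : ℕ} (hd : 0 < d) (hx : x ≤ Nat.sqrt p) (hy : y ≤ Nat.sqrt p)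
    (hx' : Nat.sqrt p < x + d) (hy' : Nat.sqrt p < y + d)
    (hxc : d ∣ x + c) (hyc : d ∣ y + c) : x = y := by
  rcases le_total x y with h | h
  · have h1 : d ∣ (y + c) - (x + c) := Nat.dvd_sub hyc hxc
    have h2 : (y + c) - (x + c) = y - x := by omega
    rw [h2] at h1
    have h3 : y - x < d := by omega
    have := Nat.eq_zero_of_dvd_of_lt h1 h3 |>.symm
    omega
  · have h1 : d ∣ (x + c) - (y + c) := Nat.dvd_sub hxc hyc
    have h2 : (x + c) - (y + c) = x - y := by omega
    rw [h2] at h1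
    have h3 : x - y < d := by omega
    have := Nat.eq_zero_of_dvd_of_lt h1 h3
    omega

lemma step_inj (hp : p.Prime) {s t : ℕ × ℕ} (hs : Valid p s) (ht : Valid p t)
    (h : step p s = step p t) : s = t := by
  obtain ⟨hvs, hsum_s, hds, _⟩ := step_spec hp hs
  obtain ⟨hvt, hsum_t, hdt, _⟩ := step_spec hp ht
  have hd : s.2 = t.2 := by
    have h1 : s.2 * (step p s).2 = t.2 * (step p s).2 := by
      calc s.2 * (step p s).2 = p - (step p s).1 ^ 2 := hds
        _ = p - (step p t).1 ^ 2 := by rw [h]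
        _ = t.2 * (step p t).2 := hdt.symm
        _ = t.2 * (step p s).2 := by rw [h]
    have h2 : 0 < (step p s).2 := hvs.2.2.1
    exact Nat.eq_of_mul_eq_mul_right h2 h1
  have hm : s.1 = t.1 := by
    have hdvds : s.2 ∣ s.1 + (step p s).1 :=
      ⟨(Nat.sqrt p + s.1) / s.2, by rw [Nat.mul_comm]; omega⟩
    have hdvdt : t.2 ∣ t.1 + (step p t).1 :=
      ⟨(Nat.sqrt p + t.1) / t.2, by rw [Nat.mul_comm]; omega⟩
    rw [← h, ← hd] at hdvdt
    exact uniq hs.2.2.1 hs.2.1 ht.2.1 hs.2.2.2.1 (hd ▸ ht.2.2.2.1) hdvds hdvdt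
  exact Prod.ext hm hd

lemma exists_repeat (hp : p.Prime) (h3 : p % 4 = 3) :
    ∃ i j, i < j ∧ cfState p (i + 1) = cfState p (j + 1) := by
  classical
  set n := Nat.sqrt p
  have maps : ∀ i ∈ Finset.range ((n + 1) * (2 * n + 1) + 1),
      cfState p (i + 1) ∈ (Finset.range (n + 1)) ×ˢ (Finset.range (2 * n + 1)) := by
    intro i _
    have h := valid_cfState hp h3 (i + 1) (by omega)
    obtain ⟨h1, h2, h4, h5, h6, h7⟩ := h
    simp only [Finset.mem_product, Finset.mem_range]
    constructor <;> omega
  have hcard : ((Finset.range (n + 1)) ×ˢ (Finset.range (2 * n + 1))).card <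
      (Finset.range ((n + 1) * (2 * n + 1) + 1)).card := by
    rw [Finset.card_product, Finset.card_range, Finset.card_range, Finset.card_range]
    omega
  obtain ⟨i, hi, j, hj, hne, heq⟩ :=
    Finset.exists_ne_map_eq_of_card_lt_of_maps_to hcard maps
  rcases Nat.lt_or_ge i j with h | h
  · exact ⟨i, j, h, heq⟩
  · exact ⟨j, i, by omega, heq.symm⟩

lemma back_cancel (hp : p.Prime) (h3 : p % 4 = 3) :
    ∀ i t, cfState p (i + 1) = cfState p (i + 1 + t) → cfState p 1 = cfState p (1 + t) := by
  intro i
  induction i with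
  | zero => intro t h; simpa using h
  | succ j ih =>
    intro t h
    apply ih
    have h1 : cfState p (j + 1 + 1) = step p (cfState p (j + 1)) := rfl
    have h2 : cfState p (j + 1 + 1 + t) = step p (cfState p (j + 1 + t)) := by
      rw [show j + 1 + 1 + t = (j + 1 + t) + 1 by omega, cfState_succ]
    rw [h1, h2] at h
    exact step_inj hp (valid_cfState hp h3 _ (by omega))
      (valid_cfState hp h3 _ (by omega)) h

lemma period_exists (hp : p.Prime) (h3 : p % 4 = 3) :
    ∃ l, 0 < l ∧ cfState p (l + 1) = cfState p 1 := by
  obtain ⟨i, j, hij, heq⟩ := exists_repeat hp h3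
  obtain ⟨t, rfl⟩ : ∃ t, j = i + t := ⟨j - i, by omega⟩
  have ht : 1 ≤ t := by omega
  have := back_cancel hp h3 i t (by rw [heq]; congr 1; omega)
  refine ⟨t, by omega, ?_⟩
  rw [Nat.add_comm t 1]
  exact this.symm

section Period
variable (hp : p.Prime) (h3 : p % 4 = 3) {l : ℕ} (hl : 0 < l)
  (hper : cfState p (l + 1) = cfState p 1)

include hp h3 hl hper

lemma d_l_eq_one : (cfState p l).2 = 1 := by
  have hc := chain hp h3 l
  rw [hper, cfState_one] at hc
  have h1 : Nat.sqrt p ^ 2 < p := sqrt_sq_lt hp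
  have h2 : (cfState p l).2 * (p - Nat.sqrt p ^ 2) = 1 * (p - Nat.sqrt p ^ 2) := by
    rw [one_mul]; exact hc
  exact Nat.eq_of_mul_eq_mul_right (by omega) h2

lemma m_l_eq : (cfState p l).1 = Nat.sqrt p := by
  have hv := valid_cfState hp h3 l hl
  have hd := d_l_eq_one hp h3 hl hper
  obtain ⟨_, h2, _, h4, _, _⟩ := hv
  omega

lemma sym : ∀ i, 1 ≤ i → i ≤ l →
    (cfState p (l + 1 - i)).1 = (cfState p i).1 ∧
    (cfState p (l - i)).2 = (cfState p i).2 := by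
  intro i
  induction i with
  | zero => omega
  | succ j ih =>
    intro _ hjl
    rcases Nat.eq_zero_or_pos j with hj0 | hj0
    · subst hj0
      constructor
      · rw [show l + 1 - 1 = l from by omega, m_l_eq hp h3 hl hper, cfState_one]
      · have hc := chain hp h3 (l - 1)
        rw [show l - 1 + 1 = l from by omega, d_l_eq_one hp h3 hl hper, mul_one,
          m_l_eq hp h3 hl hper] at hc
        show (cfState p (l - 1)).2 = (cfState p 1).2
        rw [hc, cfState_one]
    · -- inductive step: j ≥ 1, j + 1 ≤ l
      obtain ⟨ihm, ihd⟩ := ih (by omega) (by omega)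
      have hjl' : j ≤ l - 1 := by omega
      have hli : 1 ≤ l - j := by omega
      have hvj := valid_cfState hp h3 j hj0
      have hvj1 := valid_cfState hp h3 (j + 1) (by omega)
      have hvlj := valid_cfState hp h3 (l - j) hli
      obtain ⟨hsj, hnj⟩ := sum_id hp h3 hj0
      obtain ⟨hslj, _⟩ := sum_id hp h3 hli
      -- m part
      have hm : (cfState p (l - j)).1 = (cfState p (j + 1)).1 := by
        apply uniq (d := (cfState p j).2) (c := (cfState p j).1)
          hvj.2.2.1 hvlj.2.1 hvj1.2.1
        · rw [← ihd]; exact hvlj.2.2.2.1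
        · exact hnj
        · refine ⟨(Nat.sqrt p + (cfState p (l - j)).1) / (cfState p (l - j)).2, ?_⟩
          have he : l - j + 1 = l + 1 - j := by omega
          rw [he] at hslj
          rw [← ihm, ← ihd]
          have hcm : (cfState p (l - j)).2 *
              ((Nat.sqrt p + (cfState p (l - j)).1) / (cfState p (l - j)).2) =
              (Nat.sqrt p + (cfState p (l - j)).1) / (cfState p (l - j)).2 *
              (cfState p (l - j)).2 := Nat.mul_comm _ _
          omega
        · refine ⟨(Nat.sqrt p + (cfState p j).1) / (cfState p j).2, ?_⟩
          have hcm : (cfState p j).2 *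
              ((Nat.sqrt p + (cfState p j).1) / (cfState p j).2) =
              (Nat.sqrt p + (cfState p j).1) / (cfState p j).2 *
              (cfState p j).2 := Nat.mul_comm _ _
          omega
      constructor
      · rw [show l + 1 - (j + 1) = l - j from by omega]; exact hm
      · have hc1 := chain hp h3 (l - j - 1)
        rw [show l - j - 1 + 1 = l - j from by omega] at hc1
        have hc2 := chain hp h3 j
        rw [hm, ihd] at hc1
        have : (cfState p (l - j - 1)).2 * (cfState p j).2 =
            (cfState p (j + 1)).2 * (cfState p j).2 := by
          rw [hc1, ← hc2]; ring
        rw [show l - (j + 1) = l - j - 1 from by omega]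
        exact Nat.eq_of_mul_eq_mul_right hvj.2.2.1 this

omit hl hper in
lemma not_sum_two_squares (a b : ℕ) : a ^ 2 + b ^ 2 ≠ p := by
  intro h
  rcases Nat.even_or_odd a with ⟨s, hs⟩ | ⟨s, hs⟩ <;>
    rcases Nat.even_or_odd b with ⟨t, ht⟩ | ⟨t, ht⟩
  · have hX : p = 4 * (s * s) + 4 * (t * t) := by rw [← h, hs, ht]; ring
    omega
  · have hX : p = 4 * (s * s) + 4 * (t * t) + 4 * t + 1 := by rw [← h, hs, ht]; ring
    omega
  · have hX : p = 4 * (s * s) + 4 * s + 4 * (t * t) + 1 := by rw [← h, hs, ht]; ring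
    omega
  · have hX : p = 4 * (s * s) + 4 * s + 4 * (t * t) + 4 * t + 2 := by rw [← h, hs, ht]; ring
    omega

lemma l_even : l % 2 = 0 := by
  by_contra hodd
  have hodd' : l % 2 = 1 := by omega
  rcases Nat.eq_or_lt_of_le hl with h1 | h1
  · -- l = 1
    have hl1 : l = 1 := h1.symm
    subst hl1
    have hc := chain hp h3 1
    rw [hper, cfState_one] at hc
    have hnsq : Nat.sqrt p ^ 2 < p := sqrt_sq_lt hp
    have hD : (p - Nat.sqrt p ^ 2) * (p - Nat.sqrt p ^ 2) = 1 * (p - Nat.sqrt p ^ 2) := by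
      rw [one_mul]; exact hc
    have hD1 : p - Nat.sqrt p ^ 2 = 1 := Nat.eq_of_mul_eq_mul_right (by omega) hD
    have h12 : (1 : ℕ) ^ 2 = 1 := by norm_num
    exact not_sum_two_squares hp h3 (Nat.sqrt p) 1 (by omega)
  · -- l = 2k+1, k ≥ 1
    set k := l / 2 with hk
    have hk1 : 1 ≤ k := by omega
    have hlk : l - k = k + 1 := by omega
    have hsym := (sym hp h3 hl hper k hk1 (by omega)).2
    rw [hlk] at hsym
    have hc := chain hp h3 k
    rw [hsym] at hc
    have hv := valid_cfState hp h3 (k + 1) (by omega)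
    have hmsq : (cfState p (k + 1)).1 ^ 2 ≤ p :=
      le_of_lt (lt_of_le_of_lt (Nat.pow_le_pow_left hv.2.1 2) (sqrt_sq_lt hp))
    have hb : (cfState p k).2 * (cfState p k).2 = (cfState p k).2 ^ 2 := by ring
    exact not_sum_two_squares hp h3 (cfState p (k + 1)).1 (cfState p k).2 (by omega)

lemma central (hmin : ∀ k, 0 < k → cfState p (k + 1) = cfState p 1 → l ≤ k) :
    (Nat.sqrt p + (cfState p (l / 2)).1) / (cfState p (l / 2)).2 = Nat.sqrt p ∨
    (Nat.sqrt p + (cfState p (l / 2)).1) / (cfState p (l / 2)).2 = Nat.sqrt p - 1 := by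
  have heven := l_even hp h3 hl hper
  have hnsq : Nat.sqrt p ^ 2 < p := sqrt_sq_lt hp
  have h2n : 2 * Nat.sqrt p < p := two_sqrt_lt hp h3
  have hsl : cfState p l = (Nat.sqrt p, 1) := by
    have h1 := m_l_eq hp h3 hl hper
    have h2 := d_l_eq_one hp h3 hl hper
    exact Prod.ext h1 h2
  set k := l / 2 with hk
  have hk1 : 1 ≤ k := by omega
  have hkl : k ≤ l := by omega
  have hl2' : l + 1 - k = k + 1 := by omega
  have hsymm := (sym hp h3 hl hper k hk1 hkl).1
  rw [hl2'] at hsymm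
  obtain ⟨hsum, _⟩ := sum_id hp h3 hk1
  obtain ⟨hM0, hMn, hD0, hnD, hDn, hDdvd⟩ := valid_cfState hp h3 k hk1
  set n := Nat.sqrt p with hn
  set M := (cfState p k).1 with hM
  set D := (cfState p k).2 with hD
  set A := (n + M) / D with hA
  clear_value M D A
  have hmsq : M ^ 2 ≤ p := le_of_lt (lt_of_le_of_lt (Nat.pow_le_pow_left hMn 2) hnsq)
  have hADcomm : A * D = D * A := Nat.mul_comm A D
  have h2m : M + M = A * D := by omega
  have hdvd2m : D ∣ 2 * M := ⟨A, by omega⟩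
  have hdvd4p : D ∣ 4 * p := by
    have h1 : D ∣ 4 * (p - M ^ 2) := Dvd.dvd.mul_left hDdvd 4
    have h2 : D ∣ (2 * M) * (2 * M) := Dvd.dvd.mul_right hdvd2m (2 * M)
    have h3' : (2 * M) * (2 * M) = 4 * (M ^ 2) := by ring
    have h4 : 4 * p = 4 * (p - M ^ 2) + (2 * M) * (2 * M) := by omega
    rw [h4]; exact Nat.dvd_add h1 h2
  have hndvd : ¬ p ∣ D := by
    intro hcon
    have := Nat.le_of_dvd hD0 hcon
    omega
  have hcop : Nat.Coprime D p := ((Nat.Prime.coprime_iff_not_dvd hp).mpr hndvd).symm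
  have hd4 : D ∣ 4 := hcop.dvd_of_dvd_mul_right hdvd4p
  have hDle : D ≤ 4 := Nat.le_of_dvd (by norm_num) hd4
  have hD3 : D ≠ 3 := by
    intro hcon
    rw [hcon] at hd4
    exact absurd hd4 (by decide)
  have hDcases : D = 1 ∨ D = 2 ∨ D = 4 := by omega
  rcases hDcases with hDv | hDv | hDv
  · -- D = 1: contradiction with minimality
    exfalso
    have hMeq : M = n := by omega
    have hkeq : cfState p k = cfState p l := by
      rw [hsl]
      refine Prod.ext ?_ ?_
      · show (cfState p k).1 = n
        omega
      · show (cfState p k).2 = 1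
        omega
    have hcyc : cfState p (k + 1) = cfState p 1 := by
      rw [cfState_succ, hkeq, ← cfState_succ, hper]
    have := hmin k (by omega) hcyc
    omega
  · -- D = 2
    obtain ⟨X, hX⟩ := hDdvd
    rw [hDv] at hX
    have hModd : M % 2 = 1 := by
      rcases Nat.even_or_odd M with ⟨t, ht⟩ | ⟨t, ht⟩
      · exfalso
        have hm2 : M ^ 2 = 4 * (t * t) := by rw [ht]; ring
        omega
      · omega
    have hMc : M = n ∨ M = n - 1 := by omega
    rcases hMc with h | h
    · left; rw [hA, hDv, h]; omega
    · right; rw [hA, hDv, h]; omega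
  · -- D = 4
    exfalso
    obtain ⟨X, hX⟩ := hDdvd
    rw [hDv] at hX
    have h2m4 : M + M = A * 4 := by rw [← hDv]; exact h2m
    have hMeven : M % 2 = 0 := by omega
    obtain ⟨t, ht⟩ : ∃ t, M = 2 * t := ⟨M / 2, by omega⟩
    have hm2 : M ^ 2 = 4 * (t * t) := by rw [ht]; ring
    omega

end Period
end CFAux

theorem stmt9 (p : ℕ) (hp : p.Prime) (h3 : p % 4 = 3) :
    (cfA p (cfPeriod p / 2) = Nat.sqrt p ∨ cfA p (cfPeriod p / 2) = Nat.sqrt p - 1) ∧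
    Real.sqrt p - 2 < cfA p (cfPeriod p / 2) ∧ cfA p (cfPeriod p / 2) ≤ Nat.sqrt p := by
  classical
  have hne : {l | 0 < l ∧ cfState p (l + 1) = cfState p 1}.Nonempty := by
    obtain ⟨l, h1, h2⟩ := CFAux.period_exists hp h3
    exact ⟨l, h1, h2⟩
  have hmem := Nat.sInf_mem hne
  rw [Set.mem_setOf_eq] at hmem
  obtain ⟨hl, hper⟩ := hmem
  have hmin : ∀ k, 0 < k → cfState p (k + 1) = cfState p 1 → cfPeriod p ≤ k :=
    fun k hk he => Nat.sInf_le ⟨hk, he⟩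
  have hcentral' := CFAux.central hp h3 hl hper hmin
  have hAeq : cfA p (cfPeriod p / 2) =
      (Nat.sqrt p + (cfState p (cfPeriod p / 2)).1) / (cfState p (cfPeriod p / 2)).2 := rfl
  have hcentral : cfA p (cfPeriod p / 2) = Nat.sqrt p ∨
      cfA p (cfPeriod p / 2) = Nat.sqrt p - 1 := by rw [hAeq]; exact hcentral'
  have hn1 : 1 ≤ Nat.sqrt p := CFAux.sqrt_pos' h3
  have hlt : p < (Nat.sqrt p + 1) ^ 2 := CFAux.lt_sqrt_succ_sq
  refine ⟨hcentral, ?_, ?_⟩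
  · have hsq : Real.sqrt p < ((Nat.sqrt p : ℝ)) + 1 := by
      rw [show ((Nat.sqrt p : ℝ) + 1) = ((Nat.sqrt p + 1 : ℕ) : ℝ) by push_cast; ring]
      refine (Real.sqrt_lt' (by positivity)).mpr ?_
      exact_mod_cast hlt
    have hn1' : (1 : ℝ) ≤ (Nat.sqrt p : ℝ) := by exact_mod_cast hn1
    rcases hcentral with h | h <;> rw [h]
    · linarith
    · rw [Nat.cast_sub hn1]
      push_cast
      linarith
  · rcases hcentral with h | h <;> omega
end
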